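/- arXiv:1505.04235 — 4 statements merged into one kernel-verified Lean document; each statement's English description precedes it below -/
import Mathlib

section
/- If G is a graph with a path decomposition P, and C is a cycle in G of length at least 4, then some two non-consecutive vertices of C appear together in a common bag of P. -/
/-- A path decomposition of `G` with bags `X 0, ..., X (N-1)`. -/
def IsPathDecomp {V : Type*} (G : SimpleGraph V) (N : ℕ) (X : ℕ → Finset V) : Prop :=
  (∀ v : V, ∃ i, i < N ∧ v ∈ X i) ∧
  (∀ u v : V, G.Adj u v → ∃ i, i < N ∧ u ∈ X i ∧ v ∈ X i) ∧
  (∀ (v : V) (i j k : ℕ), i ≤ j → j ≤ k → k < N → v ∈ X i → v ∈ X k → v ∈ X j)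

private lemma support_getElem_eq {V : Type*} {G : SimpleGraph V} :
    ∀ {u v : V} (p : G.Walk u v) (i : ℕ) (h : i < p.support.length),
      p.support[i] = p.getVert i := by
  intro u v p
  induction p with
  | nil =>
    intro i h
    have h1 : i = 0 := by simp [SimpleGraph.Walk.support_nil] at h; omega
    subst h1
    simp [SimpleGraph.Walk.support_nil, SimpleGraph.Walk.getVert_zero]
  | cons hadj q ih =>
    intro i h
    match i with
    | 0 => simp [SimpleGraph.Walk.support_cons, SimpleGraph.Walk.getVert_zero]
    | (k + 1) =>
      simp only [SimpleGraph.Walk.support_cons, List.getElem_cons_succ,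
        SimpleGraph.Walk.getVert_cons_succ]
      exact ih k (by simpa [SimpleGraph.Walk.support_cons] using h)

private lemma mem_edges_exists {V : Type*} {G : SimpleGraph V} :
    ∀ {u v : V} (p : G.Walk u v) {e : Sym2 V}, e ∈ p.edges →
      ∃ i, i < p.length ∧ e = s(p.getVert i, p.getVert (i + 1)) := by
  intro u v p
  induction p with
  | nil => intro e he; simp at he
  | @cons u x w hadj q ih =>
    intro e he
    rw [SimpleGraph.Walk.edges_cons, List.mem_cons] at he
    rcases he with he | he
    · exact ⟨0, by simp, by simpa [SimpleGraph.Walk.getVert_zero,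
        SimpleGraph.Walk.getVert_cons_succ] using he⟩
    · obtain ⟨i, hi, hei⟩ := ih he
      exact ⟨i + 1, by simp; omega, by
        simpa [SimpleGraph.Walk.getVert_cons_succ] using hei⟩

/-- If `G` has a path decomposition and `c` is a cycle of length at least 4 in `G`, then
some two non-consecutive vertices of `c` (distinct vertices not joined by an edge of the
cycle) appear together in a common bag. -/
theorem stmt1 {V : Type*} (G : SimpleGraph V) (N : ℕ) (X : ℕ → Finset V)
    (hP : IsPathDecomp G N X) :
    ∀ (x : V) (c : G.Walk x x), c.IsCycle → 4 ≤ c.length →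
      ∃ u w : V, u ∈ c.support ∧ w ∈ c.support ∧ u ≠ w ∧ s(u, w) ∉ c.edges ∧
        ∃ i, i < N ∧ u ∈ X i ∧ w ∈ X i := by
  classical
  intro x c hc hlen
  -- rightmost bag index of each vertex
  have hSne : ∀ v : V, ((Finset.range N).filter (fun i => v ∈ X i)).Nonempty := by
    intro v
    obtain ⟨i, hi, hvi⟩ := hP.1 v
    exact ⟨i, by simp [hi, hvi]⟩
  set r : V → ℕ := fun v => ((Finset.range N).filter (fun i => v ∈ X i)).max' (hSne v) with hr
  have hrmem : ∀ v, r v < N ∧ v ∈ X (r v) := by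
    intro v
    have := Finset.max'_mem _ (hSne v)
    simpa [hr, Finset.mem_filter] using this
  have hrle : ∀ v i, i < N → v ∈ X i → i ≤ r v := by
    intro v i hi hvi
    exact Finset.le_max' _ i (by simp [hi, hvi])
  -- pick v in the cycle minimizing r
  obtain ⟨v, hvmem, hvmin⟩ := (c.support.toFinset).exists_min_image r
    ⟨x, List.mem_toFinset.mpr c.start_mem_support⟩
  have hvsupp : v ∈ c.support := List.mem_toFinset.mp hvmem
  have hvmin' : ∀ w ∈ c.support, r v ≤ r w := fun w hw => hvmin w (List.mem_toFinset.mpr hw)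
  set c' := c.rotate v hvsupp with hc'def
  have hc' : c'.IsCycle := hc.rotate hvsupp
  have hlen' : c'.length = c.length := by
    have := (c.rotate_edges v hvsupp).perm.length_eq
    rwa [SimpleGraph.Walk.length_edges, SimpleGraph.Walk.length_edges] at this
  set n := c'.length with hn
  have hn4 : 4 ≤ n := by omega
  set a := c'.getVert 1 with ha
  set b := c'.getVert (n - 1) with hb
  have hgl : c'.getVert n = v := c'.getVert_length
  have hadj_va : G.Adj v a := by
    have := c'.adj_getVert_succ (i := 0) (by omega)
    simpa [SimpleGraph.Walk.getVert_zero] using this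
  have hadj_bv : G.Adj b v := by
    have := c'.adj_getVert_succ (i := n - 1) (by omega)
    rwa [show n - 1 + 1 = n by omega, hgl] at this
  have hnodup : c'.support.tail.Nodup := hc'.support_nodup
  have hstl : c'.support.length = n + 1 := by rw [SimpleGraph.Walk.length_support]
  have htlen : c'.support.tail.length = n := by
    rw [List.length_tail, hstl]; omega
  -- getVert of indices in [1, n] equals elements of the nodup tail
  have key : ∀ i, 1 ≤ i → (h2 : i ≤ n) → c'.getVert i = c'.support.tail[i - 1]'(by omega) := by
    intro i h1 h2
    have h3 : i < c'.support.length := by omega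
    have e1 := support_getElem_eq c' i h3
    rw [← e1]
    match i, h1, h2, h3 with
    | (k + 1), _, h2, h3 =>
      exact (List.getElem_tail (l := c'.support) (i := k) (by rw [List.length_tail, hstl]; omega)).symm
  have hinj : ∀ i j, 1 ≤ i → i ≤ n → 1 ≤ j → j ≤ n → c'.getVert i = c'.getVert j → i = j := by
    intro i j hi1 hi2 hj1 hj2 hij
    rw [key i hi1 hi2, key j hj1 hj2] at hij
    have := (List.Nodup.getElem_inj_iff hnodup).mp hij
    omega
  have hva : v ≠ a := G.ne_of_adj hadj_va
  have hbv : b ≠ v := G.ne_of_adj hadj_bv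
  have hab : a ≠ b := by
    intro h
    have := hinj 1 (n - 1) le_rfl (by omega) (by omega) (by omega)
      (by rw [← ha, ← hb]; exact h)
    omega
  -- a, b in the tail of c'.support hence in c.support
  have hamem' : a ∈ c'.support.tail := by
    have h := key 1 le_rfl (by omega)
    rw [ha, h]; exact List.getElem_mem _
  have hbmem' : b ∈ c'.support.tail := by
    have h := key (n - 1) (by omega) (by omega)
    rw [hb, h]; exact List.getElem_mem _
  have hamem : a ∈ c.support :=
    List.mem_of_mem_tail ((c.support_rotate v hvsupp).mem_iff.mp hamem')
  have hbmem : b ∈ c.support :=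
    List.mem_of_mem_tail ((c.support_rotate v hvsupp).mem_iff.mp hbmem')
  -- s(a,b) is not an edge of the cycle
  have hnotedge' : s(a, b) ∉ c'.edges := by
    intro hmem
    obtain ⟨i, hi, hei⟩ := mem_edges_exists c' hmem
    rw [Sym2.eq_iff] at hei
    rcases hei with ⟨h1, h2⟩ | ⟨h1, h2⟩
    · -- a = getVert i, b = getVert (i+1)
      rcases Nat.eq_zero_or_pos i with h0 | h0
      · subst h0; rw [c'.getVert_zero] at h1; exact hva h1.symm
      rw [ha] at h1
      have hi1 : 1 = i := hinj 1 i le_rfl (by omega) (by omega) (by omega) h1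
      rw [hb] at h2
      have : n - 1 = i + 1 := hinj (n - 1) (i + 1) (by omega) (by omega) (by omega)
        (by omega) h2
      omega
    · -- b = getVert i, a = getVert (i+1)
      rcases Nat.eq_zero_or_pos i with h0 | h0
      · subst h0; rw [c'.getVert_zero] at h2; exact hbv h2
      rw [hb] at h2
      have hni : n - 1 = i := hinj (n - 1) i (by omega) (by omega) (by omega) (by omega) h2
      have hin : i + 1 = n := by omega
      rw [hin, hgl] at h1
      exact hva h1.symm
  have hnotedge : s(a, b) ∉ c.edges := fun h =>
    hnotedge' ((c.rotate_edges v hvsupp).mem_iff.mpr h)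
  -- bag argument
  obtain ⟨i1, hi1N, hvX1, haX1⟩ := hP.2.1 v a hadj_va
  obtain ⟨i2, hi2N, hbX2, hvX2⟩ := hP.2.1 b v hadj_bv
  have h1le : i1 ≤ r v := hrle v i1 hi1N hvX1
  have h2le : i2 ≤ r v := hrle v i2 hi2N hvX2
  have hrva : r v ≤ r a := hvmin' a hamem
  have hrvb : r v ≤ r b := hvmin' b hbmem
  have haX : a ∈ X (r v) :=
    hP.2.2 a i1 (r v) (r a) h1le hrva (hrmem a).1 haX1 (hrmem a).2
  have hbX : b ∈ X (r v) :=
    hP.2.2 b i2 (r v) (r b) h2le hrvb (hrmem b).1 hbX2 (hrmem b).2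
  exact ⟨a, b, hamem, hbmem, hab, hnotedge, r v, (hrmem v).1, haX, hbX⟩
end

section
/- Every simple 2-connected outer-planar graph on at least 3 vertices has a vertex of degree 2. -/
/-- `H` is a minor of `G`. -/
def IsMinorOf {W V : Type*} (H : SimpleGraph W) (G : SimpleGraph V) : Prop :=
  ∃ f : W → Set V,
    (∀ w, (f w).Nonempty) ∧
    (∀ w, (G.induce (f w)).Connected) ∧
    (∀ w₁ w₂, w₁ ≠ w₂ → Disjoint (f w₁) (f w₂)) ∧
    (∀ w₁ w₂, H.Adj w₁ w₂ → ∃ a ∈ f w₁, ∃ b ∈ f w₂, G.Adj a b)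

namespace OPH
open SimpleGraph

variable {V : Type*}

/-- Connectivity within a vertex set, via walks staying in the set. -/
def SConn (G : SimpleGraph V) (s : Set V) : Prop :=
  s.Nonempty ∧ ∀ a ∈ s, ∀ b ∈ s, ∃ w : G.Walk a b, ∀ x ∈ w.support, x ∈ s

lemma sconn_singleton (G : SimpleGraph V) (a : V) : SConn G {a} := by
  refine ⟨⟨a, rfl⟩, ?_⟩
  intro x hx y hy
  rcases hx with rfl
  rcases hy with rfl
  exact ⟨SimpleGraph.Walk.nil, by simp⟩

lemma reachable_induce_of_walk {G : SimpleGraph V} {s : Set V} :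
    ∀ {a b : V} (w : G.Walk a b), (∀ x ∈ w.support, x ∈ s) →
      ∀ (ha : a ∈ s) (hb : b ∈ s), (G.induce s).Reachable ⟨a, ha⟩ ⟨b, hb⟩ := by
  intro a b w
  induction w with
  | nil => intro _ _ _; exact SimpleGraph.Reachable.refl _
  | @cons a c b h p ih =>
      intro hw ha hb
      have hc : c ∈ s := hw _ (by simp)
      have hadj : (G.induce s).Adj ⟨a, ha⟩ ⟨c, hc⟩ := h
      exact hadj.reachable.trans (ih (fun x hx => hw x (by simp [hx])) hc hb)

def induceHom' (G : SimpleGraph V) (s : Set V) : G.induce s →g G :=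
  ⟨Subtype.val, fun h => h⟩

lemma sconn_of_induce_connected {G : SimpleGraph V} {s : Set V}
    (h : (G.induce s).Connected) : SConn G s := by
  have hne : s.Nonempty := by
    obtain ⟨⟨a, ha⟩⟩ := h.nonempty
    exact ⟨a, ha⟩
  refine ⟨hne, fun a ha b hb => ?_⟩
  obtain ⟨p⟩ := h.preconnected ⟨a, ha⟩ ⟨b, hb⟩
  refine ⟨p.map (induceHom' G s), ?_⟩
  intro x hx
  replace hx : x ∈ (p.map (induceHom' G s)).support := hx
  rw [SimpleGraph.Walk.support_map] at hx
  obtain ⟨y, hy, rfl⟩ := List.mem_map.mp hx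
  exact y.2

lemma induce_connected_of_sconn {G : SimpleGraph V} {s : Set V}
    (h : SConn G s) : (G.induce s).Connected := by
  obtain ⟨⟨a0, ha0⟩, hw⟩ := h
  rw [SimpleGraph.connected_iff]
  refine ⟨?_, ⟨⟨a0, ha0⟩⟩⟩
  rintro ⟨a, ha⟩ ⟨b, hb⟩
  obtain ⟨w, hsup⟩ := hw a ha b hb
  exact reachable_induce_of_walk w hsup ha hb

lemma walk_of_le {G H : SimpleGraph V} (hle : ∀ a b, H.Adj a b → G.Adj a b) :
    ∀ {a b : V} (w : H.Walk a b), ∃ w' : G.Walk a b, ∀ x, x ∈ w'.support → x ∈ w.support := by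
  intro a b w
  induction w with
  | nil => exact ⟨SimpleGraph.Walk.nil, by simp⟩
  | @cons a c b h p ih =>
      obtain ⟨w', hw'⟩ := ih
      refine ⟨SimpleGraph.Walk.cons (hle _ _ h) w', ?_⟩
      intro x hx
      rw [SimpleGraph.Walk.support_cons] at hx ⊢
      rcases List.mem_cons.mp hx with rfl | hx
      · exact List.mem_cons_self
      · exact List.mem_cons_of_mem _ (hw' _ hx)

lemma SConn.mono {G H : SimpleGraph V} {s : Set V} (hle : ∀ a b, H.Adj a b → G.Adj a b)
    (h : SConn H s) : SConn G s := by
  refine ⟨h.1, fun a ha b hb => ?_⟩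
  obtain ⟨w, hsup⟩ := h.2 a ha b hb
  obtain ⟨w', hw'⟩ := walk_of_le hle w
  exact ⟨w', fun x hx => hsup x (hw' x hx)⟩

lemma eflip {G : SimpleGraph V} {A B : Set V} (h : ∃ a ∈ A, ∃ b ∈ B, G.Adj a b) :
    ∃ a ∈ B, ∃ b ∈ A, G.Adj a b := by
  obtain ⟨a, ha, b, hb, hab⟩ := h
  exact ⟨b, hb, a, ha, hab.symm⟩

lemma mk_k4 {G : SimpleGraph V} {A B C D : Set V}
    (hA : SConn G A) (hB : SConn G B) (hC : SConn G C) (hD : SConn G D)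
    (dAB : Disjoint A B) (dAC : Disjoint A C) (dAD : Disjoint A D)
    (dBC : Disjoint B C) (dBD : Disjoint B D) (dCD : Disjoint C D)
    (eAB : ∃ a ∈ A, ∃ b ∈ B, G.Adj a b) (eAC : ∃ a ∈ A, ∃ b ∈ C, G.Adj a b)
    (eAD : ∃ a ∈ A, ∃ b ∈ D, G.Adj a b) (eBC : ∃ a ∈ B, ∃ b ∈ C, G.Adj a b)
    (eBD : ∃ a ∈ B, ∃ b ∈ D, G.Adj a b) (eCD : ∃ a ∈ C, ∃ b ∈ D, G.Adj a b) :
    IsMinorOf (completeGraph (Fin 4)) G := by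
  refine ⟨![A, B, C, D], ?_, ?_, ?_, ?_⟩
  · intro w
    fin_cases w
    · exact hA.1
    · exact hB.1
    · exact hC.1
    · exact hD.1
  · intro w
    fin_cases w
    · exact induce_connected_of_sconn hA
    · exact induce_connected_of_sconn hB
    · exact induce_connected_of_sconn hC
    · exact induce_connected_of_sconn hD
  · intro w₁ w₂ hne
    fin_cases w₁ <;> fin_cases w₂ <;>
      simp only [Matrix.cons_val_zero, Matrix.cons_val_one, Matrix.head_cons,
        Matrix.cons_val_two, Matrix.tail_cons, Matrix.cons_val_three] <;>
      first
        | exact absurd rfl hne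
        | exact dAB | exact dAB.symm | exact dAC | exact dAC.symm
        | exact dAD | exact dAD.symm | exact dBC | exact dBC.symm
        | exact dBD | exact dBD.symm | exact dCD | exact dCD.symm
  · intro w₁ w₂ hne
    fin_cases w₁ <;> fin_cases w₂ <;>
      simp only [Matrix.cons_val_zero, Matrix.cons_val_one, Matrix.head_cons,
        Matrix.cons_val_two, Matrix.tail_cons, Matrix.cons_val_three] <;>
      first
        | exact (by simpa using hne : False).elim
        | exact eAB | exact eflip eAB | exact eAC | exact eflip eAC
        | exact eAD | exact eflip eAD | exact eBC | exact eflip eBC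
        | exact eBD | exact eflip eBD | exact eCD | exact eflip eCD


def rTo (G : SimpleGraph V) (s : Set V) : SimpleGraph V where
  Adj a b := G.Adj a b ∧ a ∈ s ∧ b ∈ s
  symm := ⟨fun a b ⟨h, ha, hb⟩ => ⟨h.symm, hb, ha⟩⟩
  loopless := ⟨fun a h => G.loopless.irrefl a h.1⟩

lemma rTo_le {G : SimpleGraph V} {s : Set V} : ∀ a b, (rTo G s).Adj a b → G.Adj a b :=
  fun _ _ h => h.1

def cE (G : SimpleGraph V) (u v : V) : SimpleGraph V where
  Adj a b := a ≠ b ∧ a ≠ v ∧ b ≠ v ∧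
    (G.Adj a b ∨ (a = u ∧ G.Adj v b) ∨ (b = u ∧ G.Adj a v))
  symm := by
    refine ⟨?_⟩
    rintro a b ⟨h1, h2, h3, h4⟩
    refine ⟨h1.symm, h3, h2, ?_⟩
    rcases h4 with h | ⟨rfl, h⟩ | ⟨rfl, h⟩
    · exact Or.inl h.symm
    · exact Or.inr (Or.inr ⟨rfl, h.symm⟩)
    · exact Or.inr (Or.inl ⟨rfl, h.symm⟩)
  loopless := ⟨fun a h => h.1 rfl⟩

lemma minor_mono {W : Type*} {K : SimpleGraph W} {G H : SimpleGraph V}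
    (hle : ∀ a b, H.Adj a b → G.Adj a b) (h : IsMinorOf K H) : IsMinorOf K G := by
  obtain ⟨f, h1, h2, h3, h4⟩ := h
  refine ⟨f, h1, fun w =>
    induce_connected_of_sconn (SConn.mono hle (sconn_of_induce_connected (h2 w))), h3, ?_⟩
  intro w₁ w₂ hadj
  obtain ⟨a, ha, b, hb, hab⟩ := h4 w₁ w₂ hadj
  exact ⟨a, ha, b, hb, hle _ _ hab⟩

lemma walk_uncontract {G : SimpleGraph V} {u v : V} (huv : G.Adj u v) :
    ∀ {a b : V} (w : (cE G u v).Walk a b), ∃ w' : G.Walk a b,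
      ∀ x ∈ w'.support, x ∈ w.support ∨ (x = v ∧ u ∈ w.support) := by
  intro a b w
  induction w with
  | nil => exact ⟨SimpleGraph.Walk.nil, by simp⟩
  | @cons a c b h p ih =>
      obtain ⟨w', hw'⟩ := ih
      have hsub : ∀ x ∈ w'.support,
          x ∈ (SimpleGraph.Walk.cons h p).support ∨ (x = v ∧ u ∈ (SimpleGraph.Walk.cons h p).support) := by
        intro x hx
        rcases hw' x hx with hx' | ⟨rfl, hu⟩
        · exact Or.inl (by rw [SimpleGraph.Walk.support_cons]; exact List.mem_cons_of_mem _ hx')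
        · exact Or.inr ⟨rfl, by rw [SimpleGraph.Walk.support_cons]; exact List.mem_cons_of_mem _ hu⟩
      rcases h.2.2.2 with hab | ⟨rfl, hvb⟩ | ⟨rfl, hav⟩
      · refine ⟨SimpleGraph.Walk.cons hab w', ?_⟩
        intro x hx
        rw [SimpleGraph.Walk.support_cons] at hx
        rcases List.mem_cons.mp hx with rfl | hx
        · exact Or.inl (by simp)
        · exact hsub x hx
      · -- a = u, G.Adj v c : go u - v - c
        refine ⟨SimpleGraph.Walk.cons huv (SimpleGraph.Walk.cons hvb w'), ?_⟩
        intro x hx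
        rw [SimpleGraph.Walk.support_cons, SimpleGraph.Walk.support_cons] at hx
        rcases List.mem_cons.mp hx with rfl | hx
        · exact Or.inl (by simp)
        rcases List.mem_cons.mp hx with rfl | hx
        · exact Or.inr ⟨rfl, by simp⟩
        · exact hsub x hx
      · -- c = u, G.Adj a v : go a - v - u
        refine ⟨SimpleGraph.Walk.cons hav (SimpleGraph.Walk.cons huv.symm w'), ?_⟩
        intro x hx
        rw [SimpleGraph.Walk.support_cons, SimpleGraph.Walk.support_cons] at hx
        rcases List.mem_cons.mp hx with rfl | hx
        · exact Or.inl (by simp)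
        rcases List.mem_cons.mp hx with rfl | hx
        · exact Or.inr ⟨rfl, by simp [SimpleGraph.Walk.support_cons]⟩
        · exact hsub x hx

lemma sconn_uncontract {G : SimpleGraph V} {u v : V} (huv : G.Adj u v) {s : Set V}
    (hus : u ∉ s) (h : SConn (cE G u v) s) : SConn G s := by
  refine ⟨h.1, fun a ha b hb => ?_⟩
  obtain ⟨w, hsup⟩ := h.2 a ha b hb
  obtain ⟨w', hw'⟩ := walk_uncontract huv w
  refine ⟨w', fun x hx => ?_⟩
  rcases hw' x hx with hx' | ⟨rfl, hu⟩
  · exact hsup x hx'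
  · exact absurd (hsup u hu) hus

lemma sconn_uncontract' {G : SimpleGraph V} {u v : V} (huv : G.Adj u v) {s : Set V}
    (hus : u ∈ s) (h : SConn (cE G u v) s) : SConn G (insert v s) := by
  have core : ∀ a ∈ s, ∀ b ∈ s, ∃ w : G.Walk a b, ∀ x ∈ w.support, x ∈ insert v s := by
    intro a ha b hb
    obtain ⟨w, hsup⟩ := h.2 a ha b hb
    obtain ⟨w', hw'⟩ := walk_uncontract huv w
    refine ⟨w', fun x hx => ?_⟩
    rcases hw' x hx with hx' | ⟨rfl, _⟩
    · exact Set.mem_insert_of_mem _ (hsup x hx')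
    · exact Set.mem_insert _ _
  have toU : ∀ a ∈ insert v s, ∃ w : G.Walk a u, ∀ x ∈ w.support, x ∈ insert v s := by
    intro a ha
    rcases Set.mem_insert_iff.mp ha with hav | ha
    · subst hav
      refine ⟨SimpleGraph.Walk.cons huv.symm SimpleGraph.Walk.nil, ?_⟩
      intro x hx
      rw [SimpleGraph.Walk.support_cons] at hx
      rcases List.mem_cons.mp hx with rfl | hx
      · exact Set.mem_insert _ _
      · simp at hx
        subst hx
        exact Set.mem_insert_of_mem _ hus
    · exact core a ha u hus
  refine ⟨⟨u, Set.mem_insert_of_mem _ hus⟩, ?_⟩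
  intro a ha b hb
  obtain ⟨w1, hw1⟩ := toU a ha
  obtain ⟨w2, hw2⟩ := toU b hb
  refine ⟨w1.append w2.reverse, ?_⟩
  intro x hx
  rw [SimpleGraph.Walk.support_append] at hx
  rcases List.mem_append.mp hx with hx | hx
  · exact hw1 x hx
  · have : x ∈ w2.reverse.support := List.mem_of_mem_tail hx
    rw [SimpleGraph.Walk.support_reverse] at this
    exact hw2 x (List.mem_reverse.mp this)

lemma minor_contract {G : SimpleGraph V} {u v : V} (huv : G.Adj u v)
    (h : IsMinorOf (completeGraph (Fin 4)) (cE G u v)) :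
    IsMinorOf (completeGraph (Fin 4)) G := by
  classical
  obtain ⟨f, h1, h2, h3, h4⟩ := h
  have hvf : ∀ i, v ∉ f i := by
    intro i hvi
    have hfi : f i = {v} := by
      by_contra hne
      obtain ⟨x, hx, hxv⟩ : ∃ x ∈ f i, x ≠ v := by
        by_contra hc
        push_neg at hc
        exact hne (Set.eq_singleton_iff_unique_mem.mpr ⟨hvi, fun x hx => hc x hx⟩)
      obtain ⟨_, sc2⟩ := sconn_of_induce_connected (h2 i)
      obtain ⟨w, _⟩ := sc2 v hvi x hx
      cases w with
      | nil => exact hxv rfl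
      | cons hadj _ => exact hadj.2.1 rfl
    obtain ⟨j, hj⟩ : ∃ j : Fin 4, j ≠ i := by
      rcases Decidable.eq_or_ne i 0 with rfl | hne
      · exact ⟨1, by decide⟩
      · exact ⟨0, Ne.symm hne⟩
    obtain ⟨a, ha, b, hb, hab⟩ := h4 i j (by simpa using hj.symm)
    rw [hfi] at ha
    rcases ha with rfl
    exact hab.2.1 rfl
  refine ⟨fun i => if u ∈ f i then insert v (f i) else f i, ?_, ?_, ?_, ?_⟩
  · intro i
    show (if u ∈ f i then insert v (f i) else f i).Nonempty
    split
    · exact (h1 i).mono (Set.subset_insert _ _)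
    · exact h1 i
  · intro i
    by_cases hu : u ∈ f i
    · have : (fun i => if u ∈ f i then insert v (f i) else f i) i = insert v (f i) := by
        simp [hu]
      rw [this]
      exact induce_connected_of_sconn
        (sconn_uncontract' huv hu (sconn_of_induce_connected (h2 i)))
    · have : (fun i => if u ∈ f i then insert v (f i) else f i) i = f i := by
        simp [hu]
      rw [this]
      exact induce_connected_of_sconn
        (sconn_uncontract huv hu (sconn_of_induce_connected (h2 i)))
  · intro i j hij
    have hd := h3 i j hij
    rw [Set.disjoint_left] at hd ⊢
    intro x hx hx'
    have hmem : ∀ (k : Fin 4) (y : V), y ∈ (if u ∈ f k then insert v (f k) else f k) →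
        y ∈ f k ∨ (y = v ∧ u ∈ f k) := by
      intro k y hy
      by_cases hu : u ∈ f k
      · rw [if_pos hu] at hy
        rcases Set.mem_insert_iff.mp hy with rfl | hy
        · exact Or.inr ⟨rfl, hu⟩
        · exact Or.inl hy
      · rw [if_neg hu] at hy
        exact Or.inl hy
    rcases hmem i x hx with hxi | ⟨hxv, hui⟩
    · rcases hmem j x hx' with hxj | ⟨hxv, huj⟩
      · exact hd hxi hxj
      · exact hvf i (hxv ▸ hxi)
    · rcases hmem j x hx' with hxj | ⟨_, huj⟩
      · exact hvf j (hxv ▸ hxj)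
      · exact hd hui huj
  · intro i j hij
    obtain ⟨a, ha, b, hb, hab⟩ := h4 i j hij
    have hfsub : ∀ (k : Fin 4), f k ⊆ (if u ∈ f k then insert v (f k) else f k) := by
      intro k
      split
      · exact Set.subset_insert _ _
      · exact le_refl _
    rcases hab.2.2.2 with h' | ⟨hau, h'⟩ | ⟨hbu, h'⟩
    · exact ⟨a, hfsub i ha, b, hfsub j hb, h'⟩
    · refine ⟨v, ?_, b, hfsub j hb, h'⟩
      have hui : u ∈ f i := hau ▸ ha
      show v ∈ (if u ∈ f i then insert v (f i) else f i)
      rw [if_pos hui]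
      exact Set.mem_insert _ _
    · refine ⟨a, hfsub i ha, v, ?_, h'⟩
      have huj : u ∈ f j := hbu ▸ hb
      show v ∈ (if u ∈ f j then insert v (f j) else f j)
      rw [if_pos huj]
      exact Set.mem_insert _ _
lemma rTo_adj {G : SimpleGraph V} {s : Set V} {a b : V} :
    (rTo G s).Adj a b ↔ G.Adj a b ∧ a ∈ s ∧ b ∈ s := Iff.rfl

lemma cE_adj {G : SimpleGraph V} {u v a b : V} :
    (cE G u v).Adj a b ↔ a ≠ b ∧ a ≠ v ∧ b ≠ v ∧
      (G.Adj a b ∨ (a = u ∧ G.Adj v b) ∨ (b = u ∧ G.Adj a v)) := Iff.rfl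

lemma rTo_support_mem {G : SimpleGraph V} {s : Set V} :
    ∀ {a b : V} (w : (rTo G s).Walk a b), a ∈ s → ∀ x ∈ w.support, x ∈ s := by
  intro a b w
  induction w with
  | nil =>
      intro ha x hx
      simp at hx
      subst hx
      exact ha
  | @cons a c b h p ih =>
      intro _ x hx
      rw [SimpleGraph.Walk.support_cons] at hx
      rcases List.mem_cons.mp hx with rfl | hx
      · exact h.2.1
      · exact ih h.2.2 x hx

lemma sconn_support {G : SimpleGraph V} [DecidableEq V] {a b : V} (w : G.Walk a b) :
    SConn G {x | x ∈ w.support} := by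
  refine ⟨⟨a, w.start_mem_support⟩, ?_⟩
  intro x hx y hy
  refine ⟨(w.takeUntil x hx).reverse.append (w.takeUntil y hy), ?_⟩
  intro z hz
  rw [SimpleGraph.Walk.support_append] at hz
  rcases List.mem_append.mp hz with hz | hz
  · rw [SimpleGraph.Walk.support_reverse] at hz
    exact SimpleGraph.Walk.support_takeUntil_subset _ _ (List.mem_reverse.mp hz)
  · exact SimpleGraph.Walk.support_takeUntil_subset _ _ (List.mem_of_mem_tail hz)

lemma k4_of_clique {G : SimpleGraph V} {a b c d : V}
    (hab : G.Adj a b) (hac : G.Adj a c) (had : G.Adj a d)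
    (hbc : G.Adj b c) (hbd : G.Adj b d) (hcd : G.Adj c d) :
    IsMinorOf (completeGraph (Fin 4)) G := by
  refine mk_k4 (sconn_singleton G a) (sconn_singleton G b) (sconn_singleton G c)
    (sconn_singleton G d)
    (Set.disjoint_singleton.mpr hab.ne) (Set.disjoint_singleton.mpr hac.ne)
    (Set.disjoint_singleton.mpr had.ne) (Set.disjoint_singleton.mpr hbc.ne)
    (Set.disjoint_singleton.mpr hbd.ne) (Set.disjoint_singleton.mpr hcd.ne)
    ⟨a, rfl, b, rfl, hab⟩ ⟨a, rfl, c, rfl, hac⟩ ⟨a, rfl, d, rfl, had⟩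
    ⟨b, rfl, c, rfl, hbc⟩ ⟨b, rfl, d, rfl, hbd⟩ ⟨c, rfl, d, rfl, hcd⟩

lemma k4_of_linked {G : SimpleGraph V} {u v a b : V}
    (huv : G.Adj u v) (hua : G.Adj u a) (hub : G.Adj u b) (hva : G.Adj v a) (hvb : G.Adj v b)
    (hab : a ≠ b)
    (hreach : (rTo G {x | x ≠ u ∧ x ≠ v}).Reachable a b) :
    IsMinorOf (completeGraph (Fin 4)) G := by
  classical
  obtain ⟨w0⟩ := hreach
  obtain ⟨w, hwp⟩ := w0.toPath
  cases w with
  | nil => exact (hab rfl).elim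
  | @cons _ c _ hadj q =>
      have hpath := (SimpleGraph.Walk.cons_isPath_iff _ _).mp hwp
      have ha_s : a ∈ {x | x ≠ u ∧ x ≠ v} := hadj.2.1
      have hc_s : c ∈ {x | x ≠ u ∧ x ≠ v} := hadj.2.2
      have hBs : ∀ x ∈ q.support, x ≠ u ∧ x ≠ v := fun x hx => rTo_support_mem q hc_s x hx
      have hBconn : SConn G {x | x ∈ q.support} :=
        SConn.mono rTo_le (sconn_support q)
      refine mk_k4 (sconn_singleton G u) (sconn_singleton G v) (sconn_singleton G a) hBconn
        (Set.disjoint_singleton.mpr huv.ne) (Set.disjoint_singleton.mpr hua.ne) ?_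
        (Set.disjoint_singleton.mpr hva.ne) ?_ ?_
        ⟨u, rfl, v, rfl, huv⟩ ⟨u, rfl, a, rfl, hua⟩
        ⟨u, rfl, b, q.end_mem_support, hub⟩ ⟨v, rfl, a, rfl, hva⟩
        ⟨v, rfl, b, q.end_mem_support, hvb⟩ ⟨a, rfl, c, q.start_mem_support, hadj.1⟩
      · rw [Set.disjoint_singleton_left]
        intro hu
        exact (hBs u hu).1 rfl
      · rw [Set.disjoint_singleton_left]
        intro hv
        exact (hBs v hv).2 rfl
      · rw [Set.disjoint_singleton_left]
        exact hpath.2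

lemma cE_nbr_v {G : SimpleGraph V} {u v : V} : (cE G u v).neighborSet v = ∅ := by
  ext y
  simp only [SimpleGraph.mem_neighborSet, cE_adj, Set.mem_empty_iff_false, iff_false]
  rintro ⟨_, h, _, _⟩
  exact h rfl

lemma cE_nbr_u {G : SimpleGraph V} {u v : V} (huv : u ≠ v) :
    (cE G u v).neighborSet u = (G.neighborSet u ∪ G.neighborSet v) \ {u, v} := by
  ext y
  simp only [SimpleGraph.mem_neighborSet, cE_adj, Set.mem_diff, Set.mem_union,
    Set.mem_insert_iff, Set.mem_singleton_iff]
  constructor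
  · rintro ⟨h1, _, h3, h4⟩
    refine ⟨?_, ?_⟩
    · rcases h4 with h | ⟨_, h⟩ | ⟨hyu, _⟩
      · exact Or.inl h
      · exact Or.inr h
      · exact absurd hyu.symm h1
    · rintro (hyu | hyv)
      · exact h1 hyu.symm
      · exact h3 hyv
  · rintro ⟨h4, h5⟩
    have hyu : y ≠ u := fun h => h5 (Or.inl h)
    have hyv : y ≠ v := fun h => h5 (Or.inr h)
    refine ⟨fun h => hyu h.symm, huv, hyv, ?_⟩
    rcases h4 with h | h
    · exact Or.inl h
    · exact Or.inr (Or.inl ⟨by simp, h⟩)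

lemma cE_nbr_yes {G : SimpleGraph V} {u v x : V} (huv : u ≠ v) (hxu : x ≠ u) (hxv : x ≠ v)
    (hvx : G.Adj v x) :
    (cE G u v).neighborSet x = insert u (G.neighborSet x \ {v}) := by
  ext y
  simp only [SimpleGraph.mem_neighborSet, cE_adj, Set.mem_insert_iff, Set.mem_diff,
    Set.mem_singleton_iff]
  constructor
  · rintro ⟨h1, _, h3, h4⟩
    rcases h4 with h | ⟨h, _⟩ | ⟨rfl, _⟩
    · exact Or.inr ⟨h, h3⟩
    · exact absurd h hxu
    · exact Or.inl rfl
  · rintro (rfl | ⟨h, h3⟩)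
    · exact ⟨hxu, hxv, huv, Or.inr (Or.inr ⟨rfl, hvx.symm⟩)⟩
    · exact ⟨h.ne, hxv, h3, Or.inl h⟩

lemma cE_nbr_no {G : SimpleGraph V} {u v x : V} (hxu : x ≠ u) (hxv : x ≠ v)
    (hvx : ¬ G.Adj v x) :
    (cE G u v).neighborSet x = G.neighborSet x \ {v} := by
  ext y
  simp only [SimpleGraph.mem_neighborSet, cE_adj, Set.mem_diff, Set.mem_singleton_iff]
  constructor
  · rintro ⟨h1, _, h3, h4⟩
    rcases h4 with h | ⟨h, _⟩ | ⟨rfl, h⟩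
    · exact ⟨h, h3⟩
    · exact absurd h hxu
    · exact absurd h.symm hvx
  · rintro ⟨h, h3⟩
    exact ⟨h.ne, hxv, h3, Or.inl h⟩

lemma rTo_nbr {G : SimpleGraph V} {s : Set V} {x : V} (hx : x ∈ s) :
    (rTo G s).neighborSet x = G.neighborSet x ∩ s := by
  ext y
  simp only [SimpleGraph.mem_neighborSet, Set.mem_inter_iff, rTo_adj]
  exact ⟨fun ⟨h, _, hy⟩ => ⟨h, hy⟩, fun ⟨h, hy⟩ => ⟨h, hx, hy⟩⟩

lemma rTo_nbr' {G : SimpleGraph V} {s : Set V} {x : V} (hx : x ∉ s) :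
    (rTo G s).neighborSet x = ∅ := by
  ext y
  simp only [SimpleGraph.mem_neighborSet, Set.mem_empty_iff_false, iff_false, rTo_adj]
  rintro ⟨_, hxs, _⟩
  exact hx hxs

section Main
variable [Fintype V]

noncomputable def dg (G : SimpleGraph V) (x : V) : ℕ := (G.neighborSet x).ncard

def supp (G : SimpleGraph V) : Set V := {x | ∃ y, G.Adj x y}

def Hyp (G : SimpleGraph V) : Prop := (∃ z, 3 ≤ dg G z) ∧
  ((∃ x₀, ∀ x, x ≠ x₀ → 3 ≤ dg G x ∨ dg G x = 0) ∨
   (∃ w y, G.Adj w y ∧ 2 ≤ dg G w ∧ 2 ≤ dg G y ∧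
     ∀ x, x ≠ w → x ≠ y → 3 ≤ dg G x ∨ dg G x = 0))

def IH (G : SimpleGraph V) : Prop := ∀ G' : SimpleGraph V,
  (supp G').ncard < (supp G).ncard → Hyp G' → IsMinorOf (completeGraph (Fin 4)) G'

lemma dg_ne_zero_of_adj {G : SimpleGraph V} {x y : V} (h : G.Adj x y) : dg G x ≠ 0 := by
  intro h0
  rw [dg, Set.ncard_eq_zero (Set.toFinite _)] at h0
  have hmem : y ∈ G.neighborSet x := h
  rw [h0] at hmem
  exact hmem

lemma exists_extra {s l : Set V} (hs : 3 ≤ s.ncard) (hl : l.ncard ≤ 2) : ∃ z ∈ s, z ∉ l := by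
  by_contra hc
  push_neg at hc
  have := Set.ncard_le_ncard hc (Set.toFinite _)
  omega

lemma pair_le_two (w y : V) : ({w, y} : Set V).ncard ≤ 2 := by
  calc ({w, y} : Set V).ncard ≤ ({y} : Set V).ncard + 1 := Set.ncard_insert_le _ _
  _ ≤ 2 := by rw [Set.ncard_singleton]

lemma triple_ncard {a b c : V} (hab : a ≠ b) (hac : a ≠ c) (hbc : b ≠ c) :
    ({a, b, c} : Set V).ncard = 3 := by
  rw [Set.ncard_insert_of_notMem (by simp [hab, hac]), Set.ncard_pair hbc]

lemma supp_lt_of {G G' : SimpleGraph V} (hsub : supp G' ⊆ supp G) (x : V)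
    (hx : x ∈ supp G) (hx' : x ∉ supp G') : (supp G').ncard < (supp G).ncard :=
  Set.ncard_lt_ncard ((Set.ssubset_iff_of_subset hsub).mpr ⟨x, hx, hx'⟩) (Set.toFinite _)

lemma supp_rTo_sub {G : SimpleGraph V} {s : Set V} : supp (rTo G s) ⊆ supp G :=
  fun _ ⟨y, hy⟩ => ⟨y, hy.1⟩

lemma supp_cE_sub {G : SimpleGraph V} {u v : V} (huv : G.Adj u v) :
    supp (cE G u v) ⊆ supp G := by
  rintro x ⟨y, hy⟩
  rcases hy.2.2.2 with h | ⟨rfl, _⟩ | ⟨_, h⟩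
  · exact ⟨y, h⟩
  · exact ⟨v, huv⟩
  · exact ⟨v, h⟩

lemma notin_supp_rTo {G : SimpleGraph V} {s : Set V} {x : V} (hx : x ∉ s) :
    x ∉ supp (rTo G s) := fun ⟨_, hy⟩ => hx hy.2.1

lemma notin_supp_cE_v {G : SimpleGraph V} {u v : V} : v ∉ supp (cE G u v) :=
  fun ⟨_, hy⟩ => hy.2.1 rfl

lemma mem_supp_of_adj {G : SimpleGraph V} {x y : V} (h : G.Adj x y) : x ∈ supp G := ⟨y, h⟩

lemma dg_rTo {G : SimpleGraph V} {s : Set V} {x : V} (hx : x ∈ s) :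
    dg (rTo G s) x = (G.neighborSet x ∩ s).ncard := by rw [dg, rTo_nbr hx]

lemma dg_rTo_zero {G : SimpleGraph V} {s : Set V} {x : V} (hx : x ∉ s) :
    dg (rTo G s) x = 0 := by rw [dg, rTo_nbr' hx, Set.ncard_empty]

lemma dg_rTo_eq {G : SimpleGraph V} {s : Set V} {x : V} (hx : x ∈ s)
    (h : ∀ y, G.Adj x y → y ∈ s) : dg (rTo G s) x = dg G x := by
  have heq : G.neighborSet x ∩ s = G.neighborSet x :=
    Set.inter_eq_left.mpr (fun y hy => h y hy)
  rw [dg_rTo hx, heq, dg]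

lemma caseContract {G : SimpleGraph V} {u v : V} (ih : IH G)
    (D3 : ∀ x, 3 ≤ dg G x ∨ dg G x = 0)
    (huv : G.Adj u v)
    (hcn : ∀ t, G.Adj u t → G.Adj v t → dg G t ≠ 3)
    (hU : 3 ≤ ((G.neighborSet u ∪ G.neighborSet v) \ ({u, v} : Set V)).ncard) :
    IsMinorOf (completeGraph (Fin 4)) G := by
  have hne := huv.ne
  have hdg3u : 3 ≤ dg (cE G u v) u := by
    rw [dg, cE_nbr_u hne]; exact hU
  have hD3' : ∀ x, 3 ≤ dg (cE G u v) x ∨ dg (cE G u v) x = 0 := by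
    intro x
    by_cases hxv : x = v
    · right; subst hxv; rw [dg, cE_nbr_v, Set.ncard_empty]
    by_cases hxu : x = u
    · left; subst hxu; exact hdg3u
    rcases D3 x with h3 | h0
    · left
      simp only [dg] at h3
      by_cases hvx : G.Adj v x
      · have hvmem : v ∈ G.neighborSet x := hvx.symm
        by_cases hux : G.Adj u x
        · have h4 : 4 ≤ dg G x := by
            have := hcn x hux hvx
            simp only [dg] at this ⊢
            omega
          simp only [dg] at h4
          have humem : u ∈ G.neighborSet x \ ({v} : Set V) := ⟨hux.symm, fun h => hne h⟩
          rw [dg, cE_nbr_yes hne hxu hxv hvx, Set.insert_eq_of_mem humem,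
            Set.ncard_diff_singleton_of_mem hvmem]
          omega
        · rw [dg, cE_nbr_yes hne hxu hxv hvx,
            Set.ncard_insert_of_notMem (fun hmem => hux hmem.1.symm),
            Set.ncard_diff_singleton_of_mem hvmem]
          omega
      · have hvmem : v ∉ G.neighborSet x := fun h => hvx (SimpleGraph.Adj.symm h)
        rw [dg, cE_nbr_no hxu hxv hvx, Set.diff_singleton_eq_self hvmem]
        exact h3
    · right
      have hnx : G.neighborSet x = ∅ := by rwa [dg, Set.ncard_eq_zero] at h0
      have hvx : ¬ G.Adj v x := fun h => by
        have hm : v ∈ G.neighborSet x := h.symm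
        rw [hnx] at hm
        exact hm
      rw [dg, cE_nbr_no hxu hxv hvx, hnx, Set.empty_diff, Set.ncard_empty]
  have hlt : (supp (cE G u v)).ncard < (supp G).ncard :=
    supp_lt_of (supp_cE_sub huv) v (mem_supp_of_adj huv.symm) notin_supp_cE_v
  exact minor_contract huv (ih _ hlt ⟨⟨u, hdg3u⟩, Or.inl ⟨v, fun x _ => hD3' x⟩⟩)

lemma caseTwin {G : SimpleGraph V} {u v : V} (ih : IH G)
    (D3 : ∀ x, 3 ≤ dg G x ∨ dg G x = 0)
    (huv : G.Adj u v)
    (hU : ((G.neighborSet u ∪ G.neighborSet v) \ ({u, v} : Set V)).ncard ≤ 2) :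
    IsMinorOf (completeGraph (Fin 4)) G := by
  classical
  have deg3 : ∀ {x y : V}, G.Adj x y → 3 ≤ dg G x := fun {x y} h =>
    (D3 x).resolve_right (dg_ne_zero_of_adj h)
  set U := (G.neighborSet u ∪ G.neighborSet v) \ ({u, v} : Set V) with hUdef
  have hsub_u : G.neighborSet u \ {v} ⊆ U := by
    rintro t ⟨ht, htv⟩
    refine ⟨Or.inl ht, ?_⟩
    rintro (h | h)
    · exact G.loopless.irrefl u (h ▸ ht)
    · exact htv h
  have hsub_v : G.neighborSet v \ {u} ⊆ U := by
    rintro t ⟨ht, htu⟩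
    refine ⟨Or.inr ht, ?_⟩
    rintro (h | h)
    · exact htu h
    · exact G.loopless.irrefl v (h ▸ ht)
  have hv_mem_u : v ∈ G.neighborSet u := huv
  have hu_mem_v : u ∈ G.neighborSet v := huv.symm
  have hcard_u : 2 ≤ (G.neighborSet u \ {v}).ncard := by
    rw [Set.ncard_diff_singleton_of_mem hv_mem_u]
    have h3 := deg3 huv
    simp only [dg] at h3
    omega
  have hcard_v : 2 ≤ (G.neighborSet v \ {u}).ncard := by
    rw [Set.ncard_diff_singleton_of_mem hu_mem_v]
    have h3 := deg3 huv.symm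
    simp only [dg] at h3
    omega
  have hequ : G.neighborSet u \ {v} = U :=
    Set.eq_of_subset_of_ncard_le hsub_u (by omega) (Set.toFinite _)
  have heqv : G.neighborSet v \ {u} = U :=
    Set.eq_of_subset_of_ncard_le hsub_v (by omega) (Set.toFinite _)
  have hU2 : U.ncard = 2 := le_antisymm hU (hequ ▸ hcard_u)
  obtain ⟨a, b, hab, hUeq⟩ := Set.ncard_eq_two.mp hU2
  have hmemU : ∀ t ∈ U, G.Adj u t ∧ G.Adj v t ∧ t ≠ u ∧ t ≠ v := by
    intro t ht
    have h1 : t ∈ G.neighborSet u \ {v} := by rw [hequ]; exact ht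
    have h2 : t ∈ G.neighborSet v \ {u} := by rw [heqv]; exact ht
    exact ⟨h1.1, h2.1, fun h => h2.2 h, fun h => h1.2 h⟩
  have haU : a ∈ U := by rw [hUeq]; exact Set.mem_insert _ _
  have hbU : b ∈ U := by rw [hUeq]; exact Set.mem_insert_of_mem _ rfl
  obtain ⟨hua, hva, hau, hav⟩ := hmemU a haU
  obtain ⟨hub, hvb, hbu, hbv⟩ := hmemU b hbU
  by_cases hadj_ab : G.Adj a b
  · exact k4_of_clique huv hua hub hva hvb hadj_ab
  by_cases hre : (rTo G {x | x ≠ u ∧ x ≠ v}).Reachable a b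
  · exact k4_of_linked huv hua hub hva hvb hab hre
  set G0 := rTo G {x | x ≠ u ∧ x ≠ v} with hG0
  set S := {x | G0.Reachable a x} with hSdef
  have haS : a ∈ S := SimpleGraph.Reachable.refl a
  have hS_sub : ∀ x ∈ S, x ≠ u ∧ x ≠ v := by
    intro x hx
    obtain ⟨p⟩ := hx
    exact rTo_support_mem p ⟨hau, hav⟩ x p.end_mem_support
  have hS_closed : ∀ x ∈ S, ∀ y, G.Adj x y → y ≠ u → y ≠ v → y ∈ S := by
    intro x hx y hxy hyu hyv
    exact SimpleGraph.Reachable.trans hx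
      (SimpleGraph.Adj.reachable ⟨hxy, hS_sub x hx, ⟨hyu, hyv⟩⟩)
  have hbS : b ∉ S := fun h => hre h
  have hNsub : ∀ x ∈ S, x ≠ a → ∀ y, G.Adj x y → y ∈ S := by
    intro x hx hxa y hxy
    by_cases hyu : y = u
    · exfalso
      subst hyu
      have hxU : x ∈ U := by
        rw [← hequ]
        exact ⟨hxy.symm, fun h => (hS_sub x hx).2 h⟩
      rw [hUeq] at hxU
      rcases Set.mem_insert_iff.mp hxU with h | h
      · exact hxa h
      · rw [Set.mem_singleton_iff] at h
        subst h
        exact hbS hx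
    by_cases hyv : y = v
    · exfalso
      subst hyv
      have hxU : x ∈ U := by
        rw [← heqv]
        exact ⟨hxy.symm, fun h => (hS_sub x hx).1 h⟩
      rw [hUeq] at hxU
      rcases Set.mem_insert_iff.mp hxU with h | h
      · exact hxa h
      · rw [Set.mem_singleton_iff] at h
        subst h
        exact hbS hx
    · exact hS_closed x hx y hxy hyu hyv
  have hD3' : ∀ x, x ≠ a → 3 ≤ dg (rTo G S) x ∨ dg (rTo G S) x = 0 := by
    intro x hxa
    by_cases hxS : x ∈ S
    · rcases D3 x with h3 | h0
      · left
        rw [dg_rTo_eq hxS (fun y hy => hNsub x hxS hxa y hy)]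
        exact h3
      · right
        rw [dg_rTo hxS]
        have hnx : G.neighborSet x = ∅ := by rwa [dg, Set.ncard_eq_zero] at h0
        rw [hnx, Set.empty_inter, Set.ncard_empty]
    · right; exact dg_rTo_zero hxS
  obtain ⟨z, hzNa, hznotuv⟩ := exists_extra
    (by have := deg3 hua.symm; simpa only [dg] using this) (pair_le_two u v)
  have hz_u : z ≠ u := fun h => hznotuv (by rw [h]; exact Set.mem_insert _ _)
  have hz_v : z ≠ v := fun h => hznotuv (by rw [h]; exact Set.mem_insert_of_mem _ rfl)
  have hadj_az : G.Adj a z := hzNa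
  have hzS : z ∈ S := hS_closed a haS z hadj_az hz_u hz_v
  have hza : z ≠ a := fun h => G.loopless.irrefl a (h ▸ hadj_az)
  have hz3 : 3 ≤ dg (rTo G S) z := by
    rw [dg_rTo_eq hzS (fun y hy => hNsub z hzS hza y hy)]
    exact deg3 hadj_az.symm
  have huS : u ∉ S := fun h => (hS_sub u h).1 rfl
  have hlt : (supp (rTo G S)).ncard < (supp G).ncard :=
    supp_lt_of supp_rTo_sub u (mem_supp_of_adj huv) (notin_supp_rTo huS)
  exact minor_mono rTo_le (ih _ hlt ⟨⟨z, hz3⟩, Or.inl ⟨a, hD3'⟩⟩)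

lemma core2 {G : SimpleGraph V}
    (hcn : ∀ u v, G.Adj u v → ∃ t, G.Adj u t ∧ G.Adj v t ∧ dg G t = 3)
    {w a b c : V} (hNw : G.neighborSet w = {a, b, c})
    (hab : a ≠ b) (hac : a ≠ c) (hbc : b ≠ c)
    (hadjab : G.Adj a b) (hadjac : G.Adj a c) :
    IsMinorOf (completeGraph (Fin 4)) G := by
  classical
  have mem3 : ∀ t, G.Adj w t ↔ (t = a ∨ t = b ∨ t = c) := by
    intro t
    rw [← SimpleGraph.mem_neighborSet, hNw]
    simp
  have hwa : G.Adj w a := (mem3 a).mpr (Or.inl rfl)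
  have hwb : G.Adj w b := (mem3 b).mpr (Or.inr (Or.inl rfl))
  have hwc : G.Adj w c := (mem3 c).mpr (Or.inr (Or.inr rfl))
  by_cases hadjbc : G.Adj b c
  · exact k4_of_clique hwa hwb hwc hadjab hadjac hadjbc
  obtain ⟨t, ht1, ht2, ht3⟩ := hcn w b hwb
  have hta : t = a := by
    rcases (mem3 t).mp ht1 with h | h | h
    · exact h
    · exact absurd (h ▸ ht2) (G.loopless.irrefl b)
    · exact absurd (h ▸ ht2) hadjbc
  rw [hta] at ht2 ht3
  have ha3 : dg G a = 3 := ht3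
  have hNa : G.neighborSet a = {w, b, c} := by
    have hsub : ({w, b, c} : Set V) ⊆ G.neighborSet a := by
      intro t ht
      rcases Set.mem_insert_iff.mp ht with h | h
      · subst h; exact hwa.symm
      rcases Set.mem_insert_iff.mp h with h | h
      · subst h; exact hadjab
      · rw [Set.mem_singleton_iff] at h; subst h; exact hadjac
    have h1 : (G.neighborSet a).ncard ≤ ({w, b, c} : Set V).ncard := by
      rw [triple_ncard hwb.ne hwc.ne hbc]
      simp only [dg] at ha3
      omega
    exact (Set.eq_of_subset_of_ncard_le hsub h1 (Set.toFinite _)).symm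
  have memA : ∀ t, G.Adj a t ↔ (t = w ∨ t = b ∨ t = c) := by
    intro t
    rw [← SimpleGraph.mem_neighborSet, hNa]
    simp
  obtain ⟨t', hs1, hs2, hs3⟩ := hcn w a hwa
  have ht'ne_a : t' ≠ a := fun h => G.loopless.irrefl a (h ▸ hs2)
  rcases (mem3 t').mp hs1 with h | h | h
  · exact absurd h ht'ne_a
  · -- t' = b : dg b = 3
    rw [h] at hs2 hs3
    have hsubb : ({w, a} : Set V) ⊆ G.neighborSet b := by
      intro t ht
      rcases Set.mem_insert_iff.mp ht with h | h
      · subst h; exact hwb.symm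
      · rw [Set.mem_singleton_iff] at h; subst h; exact hadjab.symm
    have hone : (G.neighborSet b \ ({w, a} : Set V)).ncard = 1 := by
      rw [Set.ncard_diff hsubb, Set.ncard_pair hwa.ne]
      simp only [dg] at hs3
      omega
    obtain ⟨d, hd⟩ := Set.ncard_eq_one.mp hone
    have hdmem : d ∈ G.neighborSet b \ ({w, a} : Set V) := by rw [hd]; rfl
    have hbd : G.Adj b d := hdmem.1
    have hdw : d ≠ w := fun h => hdmem.2 (by rw [h]; exact Set.mem_insert _ _)
    have hda : d ≠ a := fun h => hdmem.2 (by rw [h]; exact Set.mem_insert_of_mem _ rfl)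
    have hdc : d ≠ c := fun h => hadjbc (h ▸ hbd)
    have hdb : d ≠ b := fun h => G.loopless.irrefl b (h ▸ hbd)
    have hNbsub : ∀ t, G.Adj b t → (t = w ∨ t = a ∨ t = d) := by
      intro t ht
      by_cases h1 : t = w
      · exact Or.inl h1
      by_cases h2 : t = a
      · exact Or.inr (Or.inl h2)
      have hmem : t ∈ G.neighborSet b \ ({w, a} : Set V) := ⟨ht, fun hmem => by
        rcases Set.mem_insert_iff.mp hmem with h | h
        · exact h1 h
        · exact h2 (Set.mem_singleton_iff.mp h)⟩
      rw [hd] at hmem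
      exact Or.inr (Or.inr (Set.mem_singleton_iff.mp hmem))
    obtain ⟨s, hp1, hp2, _⟩ := hcn b d hbd
    rcases hNbsub s hp1 with h | h | h
    · rw [h] at hp2
      rcases (mem3 d).mp hp2.symm with h | h | h
      · exact absurd h hda
      · exact absurd h hdb
      · exact absurd h hdc
    · rw [h] at hp2
      rcases (memA d).mp hp2.symm with h | h | h
      · exact absurd h hdw
      · exact absurd h hdb
      · exact absurd h hdc
    · rw [h] at hp2
      exact absurd hp2 (G.loopless.irrefl d)
  · -- t' = c : dg c = 3
    rw [h] at hs2 hs3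
    have hsubc : ({w, a} : Set V) ⊆ G.neighborSet c := by
      intro t ht
      rcases Set.mem_insert_iff.mp ht with h | h
      · subst h; exact hwc.symm
      · rw [Set.mem_singleton_iff] at h; subst h; exact hadjac.symm
    have hone : (G.neighborSet c \ ({w, a} : Set V)).ncard = 1 := by
      rw [Set.ncard_diff hsubc, Set.ncard_pair hwa.ne]
      simp only [dg] at hs3
      omega
    obtain ⟨e, he⟩ := Set.ncard_eq_one.mp hone
    have hemem : e ∈ G.neighborSet c \ ({w, a} : Set V) := by rw [he]; rfl
    have hce : G.Adj c e := hemem.1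
    have hew : e ≠ w := fun h => hemem.2 (by rw [h]; exact Set.mem_insert _ _)
    have hea : e ≠ a := fun h => hemem.2 (by rw [h]; exact Set.mem_insert_of_mem _ rfl)
    have heb : e ≠ b := fun h => hadjbc ((h ▸ hce).symm)
    have hec : e ≠ c := fun h => G.loopless.irrefl c (h ▸ hce)
    have hNcsub : ∀ t, G.Adj c t → (t = w ∨ t = a ∨ t = e) := by
      intro t ht
      by_cases h1 : t = w
      · exact Or.inl h1
      by_cases h2 : t = a
      · exact Or.inr (Or.inl h2)
      have hmem : t ∈ G.neighborSet c \ ({w, a} : Set V) := ⟨ht, fun hmem => by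
        rcases Set.mem_insert_iff.mp hmem with h | h
        · exact h1 h
        · exact h2 (Set.mem_singleton_iff.mp h)⟩
      rw [he] at hmem
      exact Or.inr (Or.inr (Set.mem_singleton_iff.mp hmem))
    obtain ⟨s, hp1, hp2, _⟩ := hcn c e hce
    rcases hNcsub s hp1 with h | h | h
    · rw [h] at hp2
      rcases (mem3 e).mp hp2.symm with h | h | h
      · exact absurd h hea
      · exact absurd h heb
      · exact absurd h hec
    · rw [h] at hp2
      rcases (memA e).mp hp2.symm with h | h | h
      · exact absurd h hew
      · exact absurd h heb
      · exact absurd h hec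
    · rw [h] at hp2
      exact absurd hp2 (G.loopless.irrefl e)

lemma step1 {G : SimpleGraph V}
    (hcn : ∀ u v, G.Adj u v → ∃ t, G.Adj u t ∧ G.Adj v t ∧ dg G t = 3)
    {w a b c : V} (hNw : G.neighborSet w = {a, b, c})
    (hab : a ≠ b) (hac : a ≠ c) (hbc : b ≠ c) (hadjab : G.Adj a b) :
    IsMinorOf (completeGraph (Fin 4)) G := by
  have mem3 : ∀ t, G.Adj w t ↔ (t = a ∨ t = b ∨ t = c) := by
    intro t
    rw [← SimpleGraph.mem_neighborSet, hNw]
    simp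
  have hwc : G.Adj w c := (mem3 c).mpr (Or.inr (Or.inr rfl))
  obtain ⟨t, ht1, ht2, _⟩ := hcn w c hwc
  rcases (mem3 t).mp ht1 with h | h | h
  · exact core2 hcn hNw hab hac hbc hadjab (h ▸ ht2).symm
  · have hNw' : G.neighborSet w = {b, a, c} := by
      rw [hNw]
      ext t'
      simp only [Set.mem_insert_iff, Set.mem_singleton_iff]
      tauto
    exact core2 hcn hNw' hab.symm hbc hac hadjab.symm (h ▸ ht2).symm
  · exact absurd (h ▸ ht2) (G.loopless.irrefl c)

lemma caseLocal {G : SimpleGraph V}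
    (hz : ∃ z, 3 ≤ dg G z)
    (hcn : ∀ u v, G.Adj u v → ∃ t, G.Adj u t ∧ G.Adj v t ∧ dg G t = 3) :
    IsMinorOf (completeGraph (Fin 4)) G := by
  obtain ⟨z, hz3⟩ := hz
  obtain ⟨y, hy⟩ : ∃ y, G.Adj z y := by
    obtain ⟨y, hy⟩ := Set.nonempty_of_ncard_ne_zero (s := G.neighborSet z)
      (by simp only [dg] at hz3; omega)
    exact ⟨y, hy⟩
  obtain ⟨w, hw1, hw2, hw3⟩ := hcn z y hy
  obtain ⟨a, b, c, hab, hac, hbc, hNw⟩ :=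
    Set.ncard_eq_three.mp (by simpa only [dg] using hw3)
  have mem3 : ∀ t, G.Adj w t ↔ (t = a ∨ t = b ∨ t = c) := by
    intro t
    rw [← SimpleGraph.mem_neighborSet, hNw]
    simp
  have hzy : G.Adj z y := hy
  have hNw_acb : G.neighborSet w = {a, c, b} := by
    rw [hNw]
    ext t
    simp only [Set.mem_insert_iff, Set.mem_singleton_iff]
    tauto
  have hNw_bca : G.neighborSet w = {b, c, a} := by
    rw [hNw]
    ext t
    simp only [Set.mem_insert_iff, Set.mem_singleton_iff]
    tauto
  rcases (mem3 z).mp hw1.symm with h1 | h1 | h1 <;>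
    rcases (mem3 y).mp hw2.symm with h2 | h2 | h2
  · rw [h1, h2] at hzy
    exact absurd hzy (G.loopless.irrefl a)
  · exact step1 hcn hNw hab hac hbc (h2 ▸ h1 ▸ hzy)
  · exact step1 hcn hNw_acb hac hab hbc.symm (h2 ▸ h1 ▸ hzy)
  · exact step1 hcn hNw hab hac hbc (h2 ▸ h1 ▸ hzy).symm
  · rw [h1, h2] at hzy
    exact absurd hzy (G.loopless.irrefl b)
  · exact step1 hcn hNw_bca hbc hab.symm hac.symm (h2 ▸ h1 ▸ hzy)
  · exact step1 hcn hNw_acb hac hab hbc.symm (h2 ▸ h1 ▸ hzy).symm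
  · exact step1 hcn hNw_bca hbc hab.symm hac.symm (h2 ▸ h1 ▸ hzy).symm
  · rw [h1, h2] at hzy
    exact absurd hzy (G.loopless.irrefl c)

lemma analysis {G : SimpleGraph V} (ih : IH G)
    (D3 : ∀ x, 3 ≤ dg G x ∨ dg G x = 0)
    (hz : ∃ z, 3 ≤ dg G z) :
    IsMinorOf (completeGraph (Fin 4)) G := by
  classical
  by_cases htwin : ∃ u v, G.Adj u v ∧
      ((G.neighborSet u ∪ G.neighborSet v) \ ({u, v} : Set V)).ncard ≤ 2
  · obtain ⟨u, v, huv, hU⟩ := htwin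
    exact caseTwin ih D3 huv hU
  push_neg at htwin
  by_cases hcn : ∀ u v, G.Adj u v → ∃ t, G.Adj u t ∧ G.Adj v t ∧ dg G t = 3
  · exact caseLocal hz hcn
  push_neg at hcn
  obtain ⟨u, v, huv, hT⟩ := hcn
  exact caseContract ih D3 huv hT (by have := htwin u v huv; omega)

lemma redA1 {G : SimpleGraph V} {x₀ : V} (ih : IH G)
    (hx : ∀ x, x ≠ x₀ → 3 ≤ dg G x ∨ dg G x = 0)
    (hz : ∃ z, 3 ≤ dg G z)
    (h1 : dg G x₀ = 1) :
    IsMinorOf (completeGraph (Fin 4)) G := by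
  classical
  obtain ⟨w, hw⟩ := Set.ncard_eq_one.mp h1
  have hadj_xw : G.Adj x₀ w := by
    rw [← SimpleGraph.mem_neighborSet, hw]
    rfl
  have hwx : w ≠ x₀ := hadj_xw.ne'
  set s : Set V := {x | x ≠ x₀} with hs
  have key : ∀ x, x ≠ w → ¬ G.Adj x x₀ := fun x hxw h => by
    have hm : x ∈ G.neighborSet x₀ := h.symm
    rw [hw] at hm
    exact hxw (Set.mem_singleton_iff.mp hm)
  have hdeq : ∀ x, x ≠ x₀ → x ≠ w → dg (rTo G s) x = dg G x := by
    intro x hx0 hxw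
    exact dg_rTo_eq hx0 (fun t ht (hh : t = x₀) => key x hxw (hh ▸ ht))
  have hD3' : ∀ x, x ≠ w → 3 ≤ dg (rTo G s) x ∨ dg (rTo G s) x = 0 := by
    intro x hxw
    by_cases hx0 : x = x₀
    · right
      rw [hx0]
      exact dg_rTo_zero (fun h => h rfl)
    · rw [hdeq x hx0 hxw]
      exact hx x hx0
  obtain ⟨z, hz3⟩ := hz
  have hzx0 : z ≠ x₀ := fun h => by rw [h, h1] at hz3; omega
  have hz' : ∃ z', 3 ≤ dg (rTo G s) z' := by
    by_cases hzw : z = w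
    · obtain ⟨q, hqNw, hqx⟩ := exists_extra (s := G.neighborSet w)
        (by rw [hzw] at hz3; simpa only [dg] using hz3) (pair_le_two x₀ x₀)
      have hq0 : q ≠ x₀ := fun h => hqx (by rw [h]; exact Set.mem_insert _ _)
      have hqw : q ≠ w := (hqNw : G.Adj w q).ne'
      refine ⟨q, ?_⟩
      rw [hdeq q hq0 hqw]
      exact (hx q hq0).resolve_right (dg_ne_zero_of_adj (hqNw : G.Adj w q).symm)
    · exact ⟨z, by rw [hdeq z hzx0 hzw]; exact hz3⟩
  have hlt : (supp (rTo G s)).ncard < (supp G).ncard :=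
    supp_lt_of supp_rTo_sub x₀ (mem_supp_of_adj hadj_xw)
      (notin_supp_rTo (fun h => h rfl))
  exact minor_mono rTo_le (ih _ hlt ⟨hz', Or.inl ⟨w, hD3'⟩⟩)

lemma redA2 {G : SimpleGraph V} {x₀ : V} (ih : IH G)
    (hx : ∀ x, x ≠ x₀ → 3 ≤ dg G x ∨ dg G x = 0)
    (hz : ∃ z, 3 ≤ dg G z)
    (h2 : dg G x₀ = 2) :
    IsMinorOf (completeGraph (Fin 4)) G := by
  classical
  obtain ⟨w, y, hwy, hN⟩ := Set.ncard_eq_two.mp h2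
  have hadj_xw : G.Adj x₀ w := by
    rw [← SimpleGraph.mem_neighborSet, hN]
    exact Set.mem_insert _ _
  have hadj_xy : G.Adj x₀ y := by
    rw [← SimpleGraph.mem_neighborSet, hN]
    exact Set.mem_insert_of_mem _ rfl
  have hwx0 : w ≠ x₀ := hadj_xw.ne'
  have hyx0 : y ≠ x₀ := hadj_xy.ne'
  have deg3 : ∀ {p q : V}, G.Adj p q → p ≠ x₀ → 3 ≤ dg G p := fun hpq hp =>
    (hx _ hp).resolve_right (dg_ne_zero_of_adj hpq)
  have hNmem : ∀ t, G.Adj x₀ t ↔ (t = w ∨ t = y) := by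
    intro t
    rw [← SimpleGraph.mem_neighborSet, hN]
    simp
  have key : ∀ x, x ≠ w → x ≠ y → ¬ G.Adj x x₀ := fun x hxw hxy h => by
    rcases (hNmem x).mp h.symm with hh | hh
    · exact hxw hh
    · exact hxy hh
  obtain ⟨z, hz3⟩ := hz
  have hzx0 : z ≠ x₀ := fun h => by rw [h, h2] at hz3; omega
  by_cases hadj_wy : G.Adj w y
  · -- delete x₀, mode B (w, y)
    set s : Set V := {x | x ≠ x₀} with hs
    have hdeq : ∀ x, x ≠ x₀ → x ≠ w → x ≠ y → dg (rTo G s) x = dg G x := by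
      intro x h0 h1 h2'
      exact dg_rTo_eq h0 (fun t ht (hh : t = x₀) => key x h1 h2' (hh ▸ ht))
    have hdw : 2 ≤ dg (rTo G s) w := by
      rw [dg_rTo (show w ∈ s from hwx0)]
      have heq : G.neighborSet w ∩ s = G.neighborSet w \ {x₀} := rfl
      have hm : x₀ ∈ G.neighborSet w := hadj_xw.symm
      rw [heq, Set.ncard_diff_singleton_of_mem hm]
      have h3 := deg3 hadj_xw.symm hwx0
      simp only [dg] at h3
      omega
    have hdy : 2 ≤ dg (rTo G s) y := by
      rw [dg_rTo (show y ∈ s from hyx0)]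
      have heq : G.neighborSet y ∩ s = G.neighborSet y \ {x₀} := rfl
      have hm : x₀ ∈ G.neighborSet y := hadj_xy.symm
      rw [heq, Set.ncard_diff_singleton_of_mem hm]
      have h3 := deg3 hadj_xy.symm hyx0
      simp only [dg] at h3
      omega
    have hadj' : (rTo G s).Adj w y := ⟨hadj_wy, hwx0, hyx0⟩
    have pattern : ∀ x, x ≠ w → x ≠ y → 3 ≤ dg (rTo G s) x ∨ dg (rTo G s) x = 0 := by
      intro x h1 h2'
      by_cases h0 : x = x₀
      · right
        rw [h0]
        exact dg_rTo_zero (fun h => h rfl)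
      · rw [hdeq x h0 h1 h2']
        exact hx x h0
    have hz' : ∃ z', 3 ≤ dg (rTo G s) z' := by
      by_cases hzw : z = w
      · obtain ⟨q, hqNw, hqx⟩ := exists_extra (s := G.neighborSet w)
          (by rw [hzw] at hz3; simpa only [dg] using hz3) (pair_le_two x₀ y)
        have hq0 : q ≠ x₀ := fun h => hqx (by rw [h]; exact Set.mem_insert _ _)
        have hqy : q ≠ y := fun h => hqx (by rw [h]; exact Set.mem_insert_of_mem _ rfl)
        have hqw : q ≠ w := (hqNw : G.Adj w q).ne'
        refine ⟨q, ?_⟩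
        rw [hdeq q hq0 hqw hqy]
        exact (hx q hq0).resolve_right (dg_ne_zero_of_adj (hqNw : G.Adj w q).symm)
      by_cases hzy : z = y
      · obtain ⟨q, hqNy, hqx⟩ := exists_extra (s := G.neighborSet y)
          (by rw [hzy] at hz3; simpa only [dg] using hz3) (pair_le_two x₀ w)
        have hq0 : q ≠ x₀ := fun h => hqx (by rw [h]; exact Set.mem_insert _ _)
        have hqw : q ≠ w := fun h => hqx (by rw [h]; exact Set.mem_insert_of_mem _ rfl)
        have hqy : q ≠ y := (hqNy : G.Adj y q).ne'
        refine ⟨q, ?_⟩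
        rw [hdeq q hq0 hqw hqy]
        exact (hx q hq0).resolve_right (dg_ne_zero_of_adj (hqNy : G.Adj y q).symm)
      · exact ⟨z, by rw [hdeq z hzx0 hzw hzy]; exact hz3⟩
    have hlt : (supp (rTo G s)).ncard < (supp G).ncard :=
      supp_lt_of supp_rTo_sub x₀ (mem_supp_of_adj hadj_xw)
        (notin_supp_rTo (fun h => h rfl))
    exact minor_mono rTo_le (ih _ hlt ⟨hz', Or.inr ⟨w, y, hadj', hdw, hdy, pattern⟩⟩)
  · -- contract w-x₀
    have hadj_wx : G.Adj w x₀ := hadj_xw.symm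
    have hne_wx : w ≠ x₀ := hwx0
    have hsubins : insert y (G.neighborSet w \ ({x₀} : Set V)) ⊆
        (G.neighborSet w ∪ G.neighborSet x₀) \ ({w, x₀} : Set V) := by
      intro t ht
      rcases Set.mem_insert_iff.mp ht with h | h
      · refine ⟨Or.inr (by rw [h]; exact hadj_xy), ?_⟩
        intro hh
        rcases Set.mem_insert_iff.mp hh with h' | h'
        · exact hwy (h'.symm.trans h)
        · exact hyx0 (h.symm.trans (Set.mem_singleton_iff.mp h'))
      · refine ⟨Or.inl h.1, ?_⟩
        intro hh
        rcases Set.mem_insert_iff.mp hh with h' | h'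
        · exact G.loopless.irrefl w (h' ▸ h.1)
        · exact h.2 h'
    have hcardw : 3 ≤ dg (cE G w x₀) w := by
      rw [dg, cE_nbr_u hne_wx]
      have hle := Set.ncard_le_ncard hsubins (Set.toFinite _)
      have hymem : y ∉ G.neighborSet w \ ({x₀} : Set V) := fun hm => hadj_wy hm.1
      have hm2 : x₀ ∈ G.neighborSet w := hadj_wx
      rw [Set.ncard_insert_of_notMem hymem,
        Set.ncard_diff_singleton_of_mem hm2] at hle
      have h3 := deg3 hadj_wx hwx0
      simp only [dg] at h3
      omega
    have hcarda : ∀ x, x ≠ w → x ≠ x₀ → G.Adj x₀ x → 3 ≤ dg (cE G w x₀) x := by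
      intro x hxw hxx0 hax
      rw [dg, cE_nbr_yes hne_wx hxw hxx0 hax]
      have hwmem : w ∉ G.neighborSet x \ ({x₀} : Set V) := by
        intro hm
        rcases (hNmem x).mp hax with hh | hh
        · exact hxw hh
        · -- x = y : w ∈ N y means Adj y w
          exact hadj_wy ((hh ▸ hm.1 : w ∈ G.neighborSet y) : G.Adj y w).symm
      have hm2 : x₀ ∈ G.neighborSet x := hax.symm
      rw [Set.ncard_insert_of_notMem hwmem,
        Set.ncard_diff_singleton_of_mem hm2]
      have h3 := deg3 hax.symm hxx0
      simp only [dg] at h3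
      omega
    have pattern : ∀ x, x ≠ x₀ → 3 ≤ dg (cE G w x₀) x ∨ dg (cE G w x₀) x = 0 := by
      intro x hxx0
      by_cases hxw : x = w
      · left
        rw [hxw]
        exact hcardw
      by_cases hax : G.Adj x₀ x
      · left
        exact hcarda x hxw hxx0 hax
      · -- N' x = N x \ {x₀} = N x
        have hxmem : x₀ ∉ G.neighborSet x := fun hm => hax (hm : G.Adj x x₀).symm
        have hxdg : dg (cE G w x₀) x = dg G x := by
          rw [dg, cE_nbr_no hxw hxx0 hax, Set.diff_singleton_eq_self hxmem, dg]
        rw [hxdg]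
        exact hx x hxx0
    have hlt : (supp (cE G w x₀)).ncard < (supp G).ncard :=
      supp_lt_of (supp_cE_sub hadj_wx) x₀ (mem_supp_of_adj hadj_xw)
        notin_supp_cE_v
    exact minor_contract hadj_wx
      (ih _ hlt ⟨⟨w, hcardw⟩, Or.inl ⟨x₀, pattern⟩⟩)

lemma redB {G : SimpleGraph V} {w y : V} (ih : IH G)
    (hwy : G.Adj w y) (h2w : dg G w = 2) (h2y : 2 ≤ dg G y)
    (hx : ∀ x, x ≠ w → x ≠ y → 3 ≤ dg G x ∨ dg G x = 0) :
    IsMinorOf (completeGraph (Fin 4)) G := by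
  classical
  have hyNw : y ∈ G.neighborSet w := hwy
  have hone : (G.neighborSet w \ ({y} : Set V)).ncard = 1 := by
    rw [Set.ncard_diff_singleton_of_mem hyNw]
    simp only [dg] at h2w
    omega
  obtain ⟨a, ha⟩ := Set.ncard_eq_one.mp hone
  have haNw : a ∈ G.neighborSet w \ ({y} : Set V) := by rw [ha]; rfl
  have hwa : G.Adj w a := haNw.1
  have hay : a ≠ y := fun h => haNw.2 (by rw [h]; rfl)
  have haw : a ≠ w := hwa.ne'
  have hyw : y ≠ w := hwy.ne'
  have hNwmem : ∀ t, G.Adj w t ↔ (t = y ∨ t = a) := by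
    intro t
    constructor
    · intro ht
      by_cases h : t = y
      · exact Or.inl h
      · right
        have hm : t ∈ G.neighborSet w \ ({y} : Set V) :=
          ⟨ht, fun hh => h (Set.mem_singleton_iff.mp hh)⟩
        rw [ha] at hm
        exact Set.mem_singleton_iff.mp hm
    · rintro (h | h)
      · exact h ▸ hwy
      · exact h ▸ hwa
  have hkeyw : ∀ x, x ≠ y → x ≠ a → ¬ G.Adj x w := fun x h1 h2 h => by
    rcases (hNwmem x).mp h.symm with hh | hh
    · exact h1 hh
    · exact h2 hh
  by_cases hya : G.Adj y a
  · by_cases h3y : 3 ≤ dg G y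
    · -- delete w, mode B (y, a)
      set s : Set V := {x | x ≠ w} with hs
      have hdeq : ∀ x, x ≠ w → x ≠ y → x ≠ a → dg (rTo G s) x = dg G x := by
        intro x h0 h1 h2'
        exact dg_rTo_eq h0 (fun t ht (hh : t = w) => hkeyw x h1 h2' (hh ▸ ht))
      have hdy : 2 ≤ dg (rTo G s) y := by
        rw [dg_rTo (show y ∈ s from hyw)]
        have heq : G.neighborSet y ∩ s = G.neighborSet y \ {w} := rfl
        have hm : w ∈ G.neighborSet y := hwy.symm
        rw [heq, Set.ncard_diff_singleton_of_mem hm]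
        simp only [dg] at h3y
        omega
      have hda : 2 ≤ dg (rTo G s) a := by
        rw [dg_rTo (show a ∈ s from haw)]
        have heq : G.neighborSet a ∩ s = G.neighborSet a \ {w} := rfl
        have hm : w ∈ G.neighborSet a := hwa.symm
        rw [heq, Set.ncard_diff_singleton_of_mem hm]
        have h3 := (hx a haw hay).resolve_right (dg_ne_zero_of_adj hwa.symm)
        simp only [dg] at h3
        omega
      have hadj' : (rTo G s).Adj y a := ⟨hya, hyw, haw⟩
      have pattern : ∀ x, x ≠ y → x ≠ a → 3 ≤ dg (rTo G s) x ∨ dg (rTo G s) x = 0 := by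
        intro x h1 h2'
        by_cases h0 : x = w
        · right
          rw [h0]
          exact dg_rTo_zero (fun h => h rfl)
        · rw [hdeq x h0 h1 h2']
          exact hx x h0 h1
      have hz' : ∃ z', 3 ≤ dg (rTo G s) z' := by
        obtain ⟨q, hqNy, hqx⟩ := exists_extra (s := G.neighborSet y)
          (by simpa only [dg] using h3y) (pair_le_two w a)
        have hqw : q ≠ w := fun h => hqx (by rw [h]; exact Set.mem_insert _ _)
        have hqa : q ≠ a := fun h => hqx (by rw [h]; exact Set.mem_insert_of_mem _ rfl)
        have hqy : q ≠ y := (hqNy : G.Adj y q).ne'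
        refine ⟨q, ?_⟩
        rw [hdeq q hqw hqy hqa]
        exact (hx q hqw hqy).resolve_right (dg_ne_zero_of_adj (hqNy : G.Adj y q).symm)
      have hlt : (supp (rTo G s)).ncard < (supp G).ncard :=
        supp_lt_of supp_rTo_sub w (mem_supp_of_adj hwy)
          (notin_supp_rTo (fun h => h rfl))
      exact minor_mono rTo_le (ih _ hlt ⟨hz', Or.inr ⟨y, a, hadj', hdy, hda, pattern⟩⟩)
    · -- dg y = 2 : delete w and y, mode A with exception a
      have h2y' : dg G y = 2 := le_antisymm (by omega) h2y
      have hwNy : w ∈ G.neighborSet y := hwy.symm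
      have honey : (G.neighborSet y \ ({w} : Set V)).ncard = 1 := by
        rw [Set.ncard_diff_singleton_of_mem hwNy]
        simp only [dg] at h2y'
        omega
      obtain ⟨a', ha'⟩ := Set.ncard_eq_one.mp honey
      have haNy : a ∈ G.neighborSet y \ ({w} : Set V) :=
        ⟨hya, fun hh => haw (Set.mem_singleton_iff.mp hh)⟩
      have haa : a' = a := by
        have hm := haNy
        rw [ha'] at hm
        exact (Set.mem_singleton_iff.mp hm).symm
      rw [haa] at ha'
      have hNymem : ∀ t, G.Adj y t ↔ (t = w ∨ t = a) := by
        intro t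
        constructor
        · intro ht
          by_cases h : t = w
          · exact Or.inl h
          · right
            have hm : t ∈ G.neighborSet y \ ({w} : Set V) :=
              ⟨ht, fun hh => h (Set.mem_singleton_iff.mp hh)⟩
            rw [ha'] at hm
            exact Set.mem_singleton_iff.mp hm
        · rintro (h | h)
          · exact h ▸ hwy.symm
          · exact h ▸ hya
      have hkeyy : ∀ x, x ≠ w → x ≠ a → ¬ G.Adj x y := fun x h1 h2 h => by
        rcases (hNymem x).mp h.symm with hh | hh
        · exact h1 hh
        · exact h2 hh
      set s : Set V := {x | x ≠ w ∧ x ≠ y} with hs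
      have hdeq : ∀ x, x ≠ w → x ≠ y → x ≠ a → dg (rTo G s) x = dg G x := by
        intro x h0 h1 h2'
        refine dg_rTo_eq ⟨h0, h1⟩ (fun t ht => ?_)
        refine ⟨fun hh => hkeyw x h1 h2' (hh ▸ ht), fun hh => hkeyy x h0 h2' (hh ▸ ht)⟩
      have pattern : ∀ x, x ≠ a → 3 ≤ dg (rTo G s) x ∨ dg (rTo G s) x = 0 := by
        intro x h2'
        by_cases h0 : x = w
        · right
          rw [h0]
          exact dg_rTo_zero (fun h => h.1 rfl)
        by_cases h1 : x = y
        · right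
          rw [h1]
          exact dg_rTo_zero (fun h => h.2 rfl)
        · rw [hdeq x h0 h1 h2']
          exact hx x h0 h1
      have hz' : ∃ z', 3 ≤ dg (rTo G s) z' := by
        have h3a : 3 ≤ dg G a := (hx a haw hay).resolve_right (dg_ne_zero_of_adj hwa.symm)
        obtain ⟨q, hqNa, hqx⟩ := exists_extra (s := G.neighborSet a)
          (by simpa only [dg] using h3a) (pair_le_two w y)
        have hqw : q ≠ w := fun h => hqx (by rw [h]; exact Set.mem_insert _ _)
        have hqy : q ≠ y := fun h => hqx (by rw [h]; exact Set.mem_insert_of_mem _ rfl)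
        have hqa : q ≠ a := (hqNa : G.Adj a q).ne'
        refine ⟨q, ?_⟩
        rw [hdeq q hqw hqy hqa]
        exact (hx q hqw hqy).resolve_right (dg_ne_zero_of_adj (hqNa : G.Adj a q).symm)
      have hlt : (supp (rTo G s)).ncard < (supp G).ncard :=
        supp_lt_of supp_rTo_sub w (mem_supp_of_adj hwy)
          (notin_supp_rTo (fun h => h.1 rfl))
      exact minor_mono rTo_le (ih _ hlt ⟨hz', Or.inl ⟨a, pattern⟩⟩)
  · -- ¬ Adj y a : contract y-w (merge w into y)
    have hyw_adj : G.Adj y w := hwy.symm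
    have hne_yw : y ≠ w := hyw_adj.ne
    have hcarda : 3 ≤ dg (cE G y w) a := by
      rw [dg, cE_nbr_yes hne_yw hay haw hwa]
      have hymem : y ∉ G.neighborSet a \ ({w} : Set V) := fun hm => hya (hm.1 : G.Adj a y).symm
      have hm2 : w ∈ G.neighborSet a := hwa.symm
      rw [Set.ncard_insert_of_notMem hymem,
        Set.ncard_diff_singleton_of_mem hm2]
      have h3 := (hx a haw hay).resolve_right (dg_ne_zero_of_adj hwa.symm)
      simp only [dg] at h3
      omega
    have pattern : ∀ x, x ≠ y → 3 ≤ dg (cE G y w) x ∨ dg (cE G y w) x = 0 := by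
      intro x h1
      by_cases h0 : x = w
      · right
        rw [h0, dg, cE_nbr_v, Set.ncard_empty]
      by_cases h2' : x = a
      · left
        rw [h2']
        exact hcarda
      · -- x not adjacent to w
        have hnadj : ¬ G.Adj w x := fun h => by
          rcases (hNwmem x).mp h with hh | hh
          · exact h1 hh
          · exact h2' hh
        have hwmem : w ∉ G.neighborSet x := fun hm => hnadj (hm : G.Adj x w).symm
        have hxdg : dg (cE G y w) x = dg G x := by
          rw [dg, cE_nbr_no h1 h0 hnadj, Set.diff_singleton_eq_self hwmem, dg]
        rw [hxdg]
        by_cases hxw : x = w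
        · exact absurd hxw h0
        · exact hx x hxw h1
    have hlt : (supp (cE G y w)).ncard < (supp G).ncard :=
      supp_lt_of (supp_cE_sub hyw_adj) w (mem_supp_of_adj hwy)
        notin_supp_cE_v
    exact minor_contract hyw_adj
      (ih _ hlt ⟨⟨a, hcarda⟩, Or.inl ⟨y, pattern⟩⟩)

lemma main : ∀ (n : ℕ) (G : SimpleGraph V), (supp G).ncard ≤ n → Hyp G →
    IsMinorOf (completeGraph (Fin 4)) G := by
  intro n
  induction n with
  | zero =>
      rintro G hn ⟨⟨z, hz3⟩, -⟩
      exfalso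
      have hzsupp : z ∈ supp G := by
        obtain ⟨t, ht⟩ := Set.nonempty_of_ncard_ne_zero (s := G.neighborSet z)
          (by simp only [dg] at hz3; omega)
        exact ⟨t, ht⟩
      have hne : (supp G).ncard ≠ 0 := by
        intro h0
        rw [Set.ncard_eq_zero (Set.toFinite _)] at h0
        rw [h0] at hzsupp
        exact hzsupp
      omega
  | succ n ihn =>
      intro G hn hyp
      have ih : IH G := fun G' hlt hyp' => ihn G' (by omega) hyp'
      obtain ⟨hz, hmode⟩ := hyp
      rcases hmode with ⟨x₀, hx⟩ | ⟨w, y, hwy, h2w, h2y, hx⟩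
      · by_cases h3 : 3 ≤ dg G x₀ ∨ dg G x₀ = 0
        · refine analysis ih (fun x => ?_) hz
          by_cases hxx : x = x₀
          · rw [hxx]; exact h3
          · exact hx x hxx
        · push_neg at h3
          have hd : dg G x₀ = 1 ∨ dg G x₀ = 2 := by omega
          rcases hd with h1 | h2
          · exact redA1 ih hx hz h1
          · exact redA2 ih hx hz h2
      · by_cases h3w : 3 ≤ dg G w
        · by_cases h3y : 3 ≤ dg G y
          · refine analysis ih (fun x => ?_) hz
            by_cases hxw : x = w
            · left; rw [hxw]; exact h3w
            by_cases hxy : x = y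
            · left; rw [hxy]; exact h3y
            · exact hx x hxw hxy
          · have h2 : dg G y = 2 := le_antisymm (by omega) h2y
            exact redB ih hwy.symm h2 (by omega) (fun x h1 h2' => hx x h2' h1)
        · have h2 : dg G w = 2 := le_antisymm (by omega) h2w
          exact redB ih hwy h2 h2y hx

end Main

end OPH

/-- A graph is outer-planar iff it has no `K₄` and no `K₂,₃` minor. -/
def IsOuterPlanar {V : Type*} (G : SimpleGraph V) : Prop :=
  ¬ IsMinorOf (SimpleGraph.completeGraph (Fin 4)) G ∧
  ¬ IsMinorOf (completeBipartiteGraph (Fin 2) (Fin 3)) G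

/-- Every simple 2-connected outer-planar graph on at least 3 vertices has a vertex of
degree 2. -/
theorem stmt12 {V : Type*} [Fintype V] (G : SimpleGraph V) (h3 : 3 ≤ Fintype.card V)
    (h2conn : ∀ w : V, (G.induce {x | x ≠ w}).Connected)
    (hop : IsOuterPlanar G) :
    ∃ v : V, (G.neighborSet v).ncard = 2 := by
  classical
  by_contra hcon
  push_neg at hcon
  have hmin : ∀ v : V, 2 ≤ OPH.dg G v := by
    intro v
    by_contra hlt
    push_neg at hlt
    have h01 : (G.neighborSet v).ncard ≤ 1 := by
      simp only [OPH.dg] at hlt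
      omega
    have walkarg : ∀ w : V, v ≠ w → (∀ c, G.Adj v c → c = w) → False := by
      intro w hvw hc
      obtain ⟨u, hu1, hu2⟩ : ∃ u : V, u ≠ v ∧ u ≠ w := by
        by_contra hcu
        push_neg at hcu
        have hsubu : (Finset.univ : Finset V) ⊆ {v, w} := by
          intro t _
          rcases eq_or_ne t v with rfl | htv
          · exact Finset.mem_insert_self _ _
          · rw [hcu t htv]
            exact Finset.mem_insert_of_mem (Finset.mem_singleton_self _)
        have hcard := Finset.card_le_card hsubu
        have h2le : ({v, w} : Finset V).card ≤ 2 := by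
          calc ({v, w} : Finset V).card ≤ ({w} : Finset V).card + 1 :=
            Finset.card_insert_le _ _
          _ ≤ 2 := by rw [Finset.card_singleton]
        rw [Finset.card_univ] at hcard
        omega
      have hsc := OPH.sconn_of_induce_connected (h2conn w)
      obtain ⟨wk, hsup⟩ := hsc.2 v (show v ∈ {x | x ≠ w} from hvw)
        u (show u ∈ {x | x ≠ w} from hu2)
      cases wk with
      | nil => exact hu1 rfl
      | @cons _ c _ hadj p =>
          have hcs : c ∈ (SimpleGraph.Walk.cons hadj p).support := by
            rw [SimpleGraph.Walk.support_cons]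
            exact List.mem_cons_of_mem _ p.start_mem_support
          exact (hsup c hcs) (hc c hadj)
    rcases (Set.ncard_le_one_iff_eq (Set.toFinite _)).mp h01 with hN | ⟨t, hN⟩
    · obtain ⟨w, hw⟩ := Fintype.exists_ne_of_one_lt_card (by omega) v
      refine walkarg w (Ne.symm hw) (fun c hc => ?_)
      have hm : c ∈ G.neighborSet v := hc
      rw [hN] at hm
      exact hm.elim
    · have htv : t ∈ G.neighborSet v := by rw [hN]; rfl
      have hvt : G.Adj v t := htv
      refine walkarg t hvt.ne (fun c hc => ?_)
      have hm : c ∈ G.neighborSet v := hc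
      rw [hN] at hm
      exact Set.mem_singleton_iff.mp hm
  have hall : ∀ v, 3 ≤ OPH.dg G v := by
    intro v
    have h2 := hmin v
    have hne := hcon v
    simp only [OPH.dg] at h2 ⊢
    change (G.neighborSet v).ncard ≠ 2 at hne
    omega
  have hne : Nonempty V := Fintype.card_pos_iff.mp (by omega)
  obtain ⟨v0⟩ := hne
  exact hop.1 (OPH.main (OPH.supp G).ncard G le_rfl
    ⟨⟨v0, hall v0⟩, Or.inl ⟨v0, fun x _ => Or.inl (hall x)⟩⟩)
end

section
/- Every multi-triangulated planar graph on at least 3 vertices is 2-connected. -/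
/-- A multi-triangulated planar multi-graph, encoded as a connected combinatorial map
(rotation system): darts `D` with an edge-involution `rev` (no fixed points, no loops),
a rotation `rot` whose orbits are the darts around each vertex, all faces (orbits of
`rot ∘ rev`) being triangles, and Euler's formula `|V| - |E| + |F| = 2` certifying a
planar (genus 0) embedding. -/
structure MultiTriangulation (V : Type*) [Fintype V] where
  /-- the darts (half-edges) -/
  D : Type
  [fintypeD : Fintype D]
  /-- the vertex at which a dart is based -/
  head : D → V
  /-- the opposite dart of the same edge -/
  rev : D → D
  rev_rev : ∀ d, rev (rev d) = d
  /-- no loops -/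
  no_loops : ∀ d, head (rev d) ≠ head d
  /-- the rotation: cyclic order of the darts around each vertex -/
  rot : Equiv.Perm D
  rot_head : ∀ d, head (rot d) = head d
  rot_cyclic : ∀ d d', head d = head d' → ∃ n : ℕ, (rot ^ n) d = d'
  /-- every vertex carries some dart -/
  covers : ∀ v : V, ∃ d, head d = v
  /-- the underlying multi-graph is connected -/
  conn : ∀ u v : V,
    Relation.ReflTransGen (fun a b => ∃ d, head d = a ∧ head (rev d) = b) u v
  /-- every face is a triangle: the face permutation `rot ∘ rev` has order dividing 3 … -/
  face_tri : ∀ d, rot (rev (rot (rev (rot (rev d))))) = d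
  /-- … and no fixed points, so every facial circuit has exactly three edges -/
  face_ne : ∀ d, rot (rev d) ≠ d
  /-- Euler's formula `|V| + |F| = 2 + |E|`: the embedding has genus 0, i.e. is planar -/
  euler : Fintype.card V + Fintype.card D / 3 = 2 + Fintype.card D / 2

/-- The underlying simple graph of a multi-triangulation. -/
def MultiTriangulation.graph {V : Type*} [Fintype V] (M : MultiTriangulation V) :
    SimpleGraph V :=
  SimpleGraph.fromRel (fun u v => ∃ d, M.head d = u ∧ M.head (M.rev d) = v)
namespace MultiTriangulation

variable {V : Type*} [Fintype V] (M : MultiTriangulation V)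

lemma head_rot_pow (n : ℕ) (d : M.D) : M.head ((M.rot ^ n) d) = M.head d := by
  induction n with
  | zero => rfl
  | succ n ih => rw [pow_succ', Equiv.Perm.mul_apply, M.rot_head, ih]

lemma head_rot_inv (d : M.D) : M.head (M.rot⁻¹ d) = M.head d := by
  conv_rhs => rw [← (Equiv.Perm.eq_inv_iff_eq.mp rfl : M.rot (M.rot⁻¹ d) = d), M.rot_head]

lemma adj_dart (d : M.D) : M.graph.Adj (M.head d) (M.head (M.rev d)) := by
  simp only [MultiTriangulation.graph, SimpleGraph.fromRel_adj]
  exact ⟨(M.no_loops d).symm, Or.inl ⟨d, rfl, rfl⟩⟩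

lemma sigma_sq (d : M.D) :
    M.rot (M.rev (M.rot (M.rev d))) = M.rev (M.rot⁻¹ d) := by
  have h := M.face_tri d
  have h1 : M.rev (M.rot (M.rev (M.rot (M.rev d)))) = M.rot⁻¹ d := by
    have h' := congrArg (⇑M.rot⁻¹) h
    rwa [Equiv.Perm.coe_inv, Equiv.symm_apply_apply] at h'
  have := congrArg M.rev h1
  rwa [M.rev_rev] at this

lemma triangle_link (d : M.D) :
    M.graph.Adj (M.head (M.rev d)) (M.head (M.rev (M.rot⁻¹ d))) := by
  have h := M.adj_dart (M.rot (M.rev d))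
  rw [M.rot_head] at h
  have h2 : M.head (M.rev (M.rot (M.rev d))) = M.head (M.rev (M.rot⁻¹ d)) := by
    rw [← M.rot_head (M.rev (M.rot (M.rev d))), M.sigma_sq]
  rwa [h2] at h

lemma induce_adj {w : V} {a b : V} (ha : a ≠ w) (hb : b ≠ w)
    (h : M.graph.Adj a b) :
    (M.graph.induce {x | x ≠ w}).Adj ⟨a, ha⟩ ⟨b, hb⟩ := by
  simpa using h

/-- Opposite endpoints of any two darts at `w` are connected avoiding `w`. -/
lemma reach_around {w : V} (d d' : M.D) (hd : M.head d = w) (hd' : M.head d' = w)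
    (h1 : M.head (M.rev d) ≠ w) (h2 : M.head (M.rev d') ≠ w) :
    (M.graph.induce {x | x ≠ w}).Reachable
      ⟨M.head (M.rev d), h1⟩ ⟨M.head (M.rev d'), h2⟩ := by
  revert h2
  obtain ⟨n, hn⟩ := M.rot_cyclic d d' (hd.trans hd'.symm)
  subst hn
  clear hd'
  induction n with
  | zero => intro h2; rfl
  | succ n ih =>
    intro h2
    have hhn : M.head ((M.rot ^ (n+1)) d) = w := (M.head_rot_pow _ d).trans hd
    have hn' : M.head ((M.rot ^ n) d) = w := (M.head_rot_pow _ d).trans hd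
    have hinvd : M.rot⁻¹ ((M.rot ^ (n+1)) d) = (M.rot ^ n) d := by
      rw [pow_succ', Equiv.Perm.mul_apply, Equiv.Perm.coe_inv, Equiv.symm_apply_apply]
    have hA := M.triangle_link ((M.rot ^ (n+1)) d)
    rw [hinvd] at hA
    have hne1 : M.head (M.rev ((M.rot ^ (n+1)) d)) ≠ w := fun hc =>
      M.no_loops _ (hc.trans hhn.symm)
    have hne2 : M.head (M.rev ((M.rot ^ n) d)) ≠ w := fun hc =>
      M.no_loops _ (hc.trans hn'.symm)
    exact (ih hne2).trans
      (M.induce_adj hne2 h2 hA.symm).reachable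

/-- Main lemma: reachability avoiding `w`. -/
lemma main_reach (w : V) {u v : V}
    (h : Relation.ReflTransGen
      (fun a b => ∃ d, M.head d = a ∧ M.head (M.rev d) = b) u v)
    (hu : u ≠ w) :
    (∀ hv : v ≠ w, (M.graph.induce {x | x ≠ w}).Reachable ⟨u, hu⟩ ⟨v, hv⟩) ∧
    (v = w → ∀ (d : M.D) (hd : M.head d = w) (hne : M.head (M.rev d) ≠ w),
      (M.graph.induce {x | x ≠ w}).Reachable ⟨u, hu⟩ ⟨M.head (M.rev d), hne⟩) := by
  induction h with
  | refl => exact ⟨fun hv => by rfl, fun hw => absurd hw hu⟩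
  | @tail b c hub step ih =>
    obtain ⟨d, hdb, hdc⟩ := step
    by_cases hb : b = w
    · -- b = w : use the second part of ih
      have hcw : c ≠ w := fun hc => M.no_loops d (by rw [hdc, hdb, hc, hb])
      constructor
      · intro hv
        have hne : M.head (M.rev d) ≠ w := hdc ▸ hcw
        have := ih.2 hb d (hdb.trans hb) hne
        exact hdc ▸ this
      · intro hcw'; exact absurd hcw' hcw
    · have hreach := ih.1 hb
      by_cases hc : c = w
      · refine ⟨fun hv => absurd hc hv, fun _ e he hnee => ?_⟩
        -- rev d is a dart at w whose reverse heads to b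
        have hd0 : M.head (M.rev d) = w := hdc.trans hc
        have hb0 : M.head (M.rev (M.rev d)) ≠ w := by rw [M.rev_rev, hdb]; exact hb
        have hb0' : M.head (M.rev (M.rev d)) = b := by rw [M.rev_rev, hdb]
        have hr := M.reach_around (M.rev d) e hd0 he hb0 hnee
        have : (⟨M.head (M.rev (M.rev d)), hb0⟩ :
            {x | x ≠ w}) = ⟨b, hb⟩ := Subtype.ext hb0'
        rw [this] at hr
        exact hreach.trans hr
      · refine ⟨fun hv => ?_, fun hcw' => absurd hcw' hc⟩
        have hadj : M.graph.Adj b c := by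
          rw [← hdb, ← hdc]; exact M.adj_dart d
        exact hreach.trans (M.induce_adj hb hv hadj).reachable

end MultiTriangulation

/-- Every multi-triangulated planar graph on at least 3 vertices is 2-connected. -/
theorem stmt15 {V : Type*} [Fintype V] (M : MultiTriangulation V)
    (h3 : 3 ≤ Fintype.card V) :
    M.graph.Connected ∧ ∀ w : V, (M.graph.induce {x | x ≠ w}).Connected := by
  have hnt : Nontrivial V := Fintype.one_lt_card_iff_nontrivial.mp (by omega)
  have hV : Nonempty V := inferInstance
  constructor
  · refine SimpleGraph.Connected.mk fun u v => ?_
    have h := M.conn u v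
    induction h with
    | refl => rfl
    | @tail b c hub step ih =>
      obtain ⟨d, hdb, hdc⟩ := step
      have hadj : M.graph.Adj b c := by rw [← hdb, ← hdc]; exact M.adj_dart d
      exact ih.trans hadj.reachable
  · intro w
    obtain ⟨x, hx⟩ := exists_ne w
    haveI : Nonempty {x | x ≠ w} := ⟨⟨x, hx⟩⟩
    refine SimpleGraph.Connected.mk fun a b => ?_
    obtain ⟨u, hu⟩ := a
    obtain ⟨v, hv⟩ := b
    exact (M.main_reach w (M.conn u v) hu).1 hv
end

section
/- Every multi-triangulated planar graph has at least one edge that is not a multiple edge. -/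
open Equiv
attribute [local instance] Classical.propDecidable
namespace MT17
variable {D : Type} [Fintype D]

def scs (p : Perm D) : Setoid D :=
  ⟨p.SameCycle, ⟨fun x => Perm.SameCycle.refl p x, fun h => h.symm, fun h h' => h.trans h'⟩⟩

noncomputable def z (p : Perm D) : ℕ := Nat.card (Quotient (scs p))

def adj (s : Setoid D) (a b : D) : Setoid D where
  r x y := s.r x y ∨ (s.r x a ∧ s.r b y) ∨ (s.r x b ∧ s.r a y)
  iseqv := by
    constructor
    · exact fun x => Or.inl (s.refl x)
    · rintro x y (h | ⟨h1, h2⟩ | ⟨h1, h2⟩)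
      · exact Or.inl (s.symm h)
      · exact Or.inr (Or.inr ⟨s.symm h2, s.symm h1⟩)
      · exact Or.inr (Or.inl ⟨s.symm h2, s.symm h1⟩)
    · rintro x y zz (h | ⟨h1, h2⟩ | ⟨h1, h2⟩) (h' | ⟨h1', h2'⟩ | ⟨h1', h2'⟩)
      · exact Or.inl (s.trans h h')
      · exact Or.inr (Or.inl ⟨s.trans h h1', h2'⟩)
      · exact Or.inr (Or.inr ⟨s.trans h h1', h2'⟩)
      · exact Or.inr (Or.inl ⟨h1, s.trans h2 h'⟩)
      · exact Or.inr (Or.inl ⟨h1, h2'⟩)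
      · exact Or.inl (s.trans h1 h2')
      · exact Or.inr (Or.inr ⟨h1, s.trans h2 h'⟩)
      · exact Or.inl (s.trans h1 h2')
      · exact Or.inr (Or.inr ⟨h1, h2'⟩)
set_option linter.unusedSectionVars false
variable {D : Type} [Fintype D]

theorem sc_iff_pow (p : Perm D) (x y : D) :
    p.SameCycle x y ↔ ∃ k : ℕ, (p ^ k) x = y := by
  constructor
  · intro h
    obtain ⟨i, -, hi⟩ := h.exists_pow_eq'
    exact ⟨i, hi⟩
  · rintro ⟨k, hk⟩
    exact ⟨(k : ℤ), by simpa using hk⟩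

theorem pow_mod_cycle {q : Perm D} {a : D} {r : ℕ} (hr : (q ^ r) a = a) (hrpos : 0 < r) :
    ∀ k, (q ^ k) a = (q ^ (k % r)) a := by
  intro k
  induction k using Nat.strong_induction_on with
  | _ k ih =>
    by_cases hk : k < r
    · rw [Nat.mod_eq_of_lt hk]
    · push_neg at hk
      have h1 : (q ^ k) a = (q ^ (k - r)) a := by
        have : k - r + r = k := Nat.sub_add_cancel hk
        calc (q ^ k) a = (q ^ (k - r + r)) a := by rw [this]
        _ = (q ^ (k - r)) ((q ^ r) a) := by rw [pow_add, Perm.mul_apply]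
        _ = (q ^ (k - r)) a := by rw [hr]
      rw [h1, ih (k - r) (by omega), ← Nat.mod_eq_sub_mod hk]


theorem X2 {p : Perm D} {a b : D} (hab : a ≠ b) (h : ¬ p.SameCycle a b) :
    (swap a b * p).SameCycle a b := by
  set q := swap a b * p with hq
  have hex : ∃ k, 0 < k ∧ (p ^ k) a = a :=
    ⟨orderOf p, orderOf_pos p, by rw [pow_orderOf_eq_one]; rfl⟩
  classical
  set m := Nat.find hex with hmdef
  have hm : 0 < m ∧ (p ^ m) a = a := Nat.find_spec hex
  have hmin : ∀ j, 0 < j → j < m → (p ^ j) a ≠ a := fun j h1 h2 hja =>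
    Nat.find_min hex h2 ⟨h1, hja⟩
  have hnb : ∀ j, (p ^ j) a ≠ b := fun j hj => h ((sc_iff_pow p a b).mpr ⟨j, hj⟩)
  have key : ∀ j, j ≤ m - 1 → (q ^ j) a = (p ^ j) a := by
    intro j hj
    induction j with
    | zero => rfl
    | succ i ih =>
      have hi : i ≤ m - 1 := le_trans (Nat.le_succ i) hj
      have hlt : i + 1 < m := by omega
      rw [pow_succ', Perm.mul_apply, ih hi, hq, Perm.mul_apply, ← Perm.mul_apply (p),
        ← pow_succ']
      exact swap_apply_of_ne_of_ne (hmin (i+1) (by omega) hlt) (hnb (i+1))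
  have hm1 : m - 1 + 1 = m := Nat.succ_pred_eq_of_pos hm.1
  have hfin : (q ^ (m - 1 + 1)) a = b := by
    rw [pow_succ', Perm.mul_apply, key (m-1) le_rfl, hq, Perm.mul_apply,
      ← Perm.mul_apply (p), ← pow_succ', hm1, hm.2, swap_apply_left]
  rw [hm1] at hfin
  exact (sc_iff_pow q a b).mpr ⟨m, hfin⟩

theorem X1 {p : Perm D} {a b : D} (hab : a ≠ b) (h : p.SameCycle a b) :
    ¬ (swap a b * p).SameCycle a b := by
  set q := swap a b * p with hq
  obtain ⟨k0, hk0⟩ := (sc_iff_pow p a b).mp h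
  have hk0ne : 0 < k0 := by
    rcases Nat.eq_zero_or_pos k0 with h0 | h0
    · exact absurd (by simpa [h0] using hk0) hab
    · exact h0
  have hex : ∃ k, 0 < k ∧ (p ^ k) a = b := ⟨k0, hk0ne, hk0⟩
  classical
  set r := Nat.find hex with hrdef
  have hr : 0 < r ∧ (p ^ r) a = b := Nat.find_spec hex
  have hrmin : ∀ j, 0 < j → j < r → (p ^ j) a ≠ b := fun j h1 h2 hj =>
    Nat.find_min hex h2 ⟨h1, hj⟩
  have hna : ∀ j, 0 < j → j < r → (p ^ j) a ≠ a := by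
    intro j hj hjr hja
    have hsub : (p ^ (r - j)) a = b := by
      rw [← hja, ← Perm.mul_apply, ← pow_add, Nat.sub_add_cancel (le_of_lt hjr)]
      exact hr.2
    exact hrmin (r - j) (by omega) (by omega) hsub
  have key : ∀ j, j ≤ r - 1 → (q ^ j) a = (p ^ j) a := by
    intro j hj
    induction j with
    | zero => rfl
    | succ i ih =>
      have hi : i ≤ r - 1 := le_trans (Nat.le_succ i) hj
      have hlt : i + 1 < r := by omega
      rw [pow_succ', Perm.mul_apply, ih hi, hq, Perm.mul_apply, ← Perm.mul_apply (p),
        ← pow_succ']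
      exact swap_apply_of_ne_of_ne (hna (i+1) (by omega) hlt) (hrmin (i+1) (by omega) hlt)
  have hr1 : r - 1 + 1 = r := Nat.succ_pred_eq_of_pos hr.1
  have hqr : (q ^ r) a = a := by
    have : (q ^ (r - 1 + 1)) a = a := by
      rw [pow_succ', Perm.mul_apply, key (r-1) le_rfl, hq, Perm.mul_apply,
        ← Perm.mul_apply (p), ← pow_succ', hr1, hr.2, swap_apply_right]
    rwa [hr1] at this
  intro hSC
  obtain ⟨k, hk⟩ := (sc_iff_pow q a b).mp hSC
  rw [pow_mod_cycle hqr hr.1 k] at hk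
  have hlt : k % r < r := Nat.mod_lt _ hr.1
  rw [key (k % r) (by omega)] at hk
  rcases Nat.eq_zero_or_pos (k % r) with h0 | h0
  · rw [h0] at hk; exact hab hk
  · exact hrmin (k % r) h0 hlt hk

theorem adj_ab (s : Setoid D) (a b : D) : (adj s a b).r a b :=
  Or.inr (Or.inl ⟨s.refl a, s.refl b⟩)

theorem adj_eq_self {s : Setoid D} {a b : D} (h : s.r a b) : adj s a b = s := by
  apply Setoid.ext; intro x y
  constructor
  · rintro (h' | ⟨h1, h2⟩ | ⟨h1, h2⟩)
    · exact h'
    · exact s.trans h1 (s.trans h h2)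
    · exact s.trans h1 (s.trans (s.symm h) h2)
  · exact fun h' => Or.inl h'

theorem sc_le_adj {p : Perm D} {a b : D} {x y : D}
    (hxy : (swap a b * p).SameCycle x y) : (adj (scs p) a b).r x y := by
  set q := swap a b * p with hq
  have step : ∀ w, (adj (scs p) a b).r w (q w) := by
    intro w
    by_cases hpa : p w = a
    · refine Or.inr (Or.inl ⟨⟨1, by simpa using hpa⟩, ?_⟩)
      have : q w = b := by simp [hq, Perm.mul_apply, hpa]
      rw [this]
    · by_cases hpb : p w = b
      · refine Or.inr (Or.inr ⟨⟨1, by simpa using hpb⟩, ?_⟩)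
        have : q w = a := by simp [hq, Perm.mul_apply, hpb]
        rw [this]
      · have : q w = p w := by
          rw [hq, Perm.mul_apply]; exact swap_apply_of_ne_of_ne hpa hpb
        rw [this]; exact Or.inl ⟨1, by simp⟩
  have chain : ∀ k w, (adj (scs p) a b).r w ((q ^ k) w) := by
    intro k
    induction k with
    | zero => intro w; exact (adj (scs p) a b).refl w
    | succ i ih =>
      intro w
      have : (q ^ (i+1)) w = q ((q ^ i) w) := by rw [pow_succ', Perm.mul_apply]
      rw [this]
      exact (adj (scs p) a b).trans (ih w) (step _)
  obtain ⟨k, hk⟩ := (sc_iff_pow q x y).mp hxy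
  rw [← hk]; exact chain k x

theorem adj_sc_eq {p : Perm D} {a b : D} :
    adj (scs (swap a b * p)) a b = adj (scs p) a b := by
  have h1 : ∀ (p : Perm D) (x y : D),
      (adj (scs (swap a b * p)) a b).r x y → (adj (scs p) a b).r x y := by
    intro p x y hxy
    rcases hxy with h' | ⟨hh1, hh2⟩ | ⟨hh1, hh2⟩
    · exact sc_le_adj h'
    · exact (adj (scs p) a b).trans (sc_le_adj hh1)
        ((adj (scs p) a b).trans (adj_ab _ a b) (sc_le_adj hh2))
    · exact (adj (scs p) a b).trans (sc_le_adj hh1)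
        ((adj (scs p) a b).trans ((adj (scs p) a b).symm (adj_ab _ a b)) (sc_le_adj hh2))
  apply Setoid.ext; intro x y
  constructor
  · exact h1 p x y
  · intro hxy
    have e : swap a b * (swap a b * p) = p := by
      rw [← mul_assoc, swap_mul_self, one_mul]
    exact h1 (swap a b * p) x y (by rw [e]; exact hxy)

theorem card_ne_add_one {Q : Type} [Finite Q] (c : Q) :
    Nat.card {q : Q // q ≠ c} + 1 = Nat.card Q := by
  classical
  letI := Fintype.ofFinite Q
  rw [Nat.card_eq_fintype_card, Nat.card_eq_fintype_card]
  have h1 : Fintype.card {q : Q // q = c} = 1 := Fintype.card_subtype_eq c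
  have h2 : Fintype.card {q : Q // ¬ q = c} = Fintype.card Q - Fintype.card {q : Q // q = c} :=
    Fintype.card_subtype_compl _
  have h3 : 0 < Fintype.card Q := Fintype.card_pos_iff.mpr ⟨c⟩
  have : Fintype.card {q : Q // q ≠ c} = Fintype.card {q : Q // ¬ q = c} := rfl
  omega

theorem card_adj {s : Setoid D} {a b : D} (h : ¬ s.r a b) :
    Nat.card (Quotient (adj s a b)) + 1 = Nat.card (Quotient s) := by
  classical
  let F : Quotient s → Quotient (adj s a b) :=
    fun q => Quotient.liftOn' q (fun x => Quotient.mk'' x)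
      (fun x y hxy => Quotient.sound' (Or.inl hxy))
  let g : {q : Quotient s // q ≠ Quotient.mk'' b} → Quotient (adj s a b) := fun q => F q.1
  have hbij : Function.Bijective g := by
    constructor
    · rintro ⟨q1, hq1⟩ ⟨q2, hq2⟩ hg
      induction q1 using Quotient.inductionOn' with
      | h x =>
      induction q2 using Quotient.inductionOn' with
      | h y =>
      have : (adj s a b).r x y := Quotient.exact' hg
      rcases this with h' | ⟨h1', h2'⟩ | ⟨h1', h2'⟩
      · exact Subtype.ext (Quotient.sound' h')
      · exact absurd (Quotient.sound' (s.symm h2') : (Quotient.mk'' y : Quotient s) = _) hq2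
      · exact absurd (Quotient.sound' h1' : (Quotient.mk'' x : Quotient s) = _) hq1
    · intro q
      induction q using Quotient.inductionOn' with
      | h x =>
      by_cases hxb : s.r x b
      · refine ⟨⟨Quotient.mk'' a, fun hc => h (Quotient.exact' hc)⟩, ?_⟩
        show F (Quotient.mk'' a) = Quotient.mk'' x
        exact Quotient.sound' (Or.inr (Or.inl ⟨s.refl a, s.symm hxb⟩))
      · exact ⟨⟨Quotient.mk'' x, fun hc => hxb (Quotient.exact' hc)⟩, rfl⟩
  have := Nat.card_eq_of_bijective g hbij
  rw [← this]
  exact card_ne_add_one _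

theorem card_quot_one {s : Setoid D} [Nonempty D] (h : ∀ x y, s.r x y) :
    Nat.card (Quotient s) = 1 := by
  haveI : Subsingleton (Quotient s) := ⟨by
    intro q1 q2
    induction q1 using Quotient.inductionOn' with
    | h x =>
    induction q2 using Quotient.inductionOn' with
    | h y =>
    exact Quotient.sound' (h x y)⟩
  haveI : Nonempty (Quotient s) := ⟨Quotient.mk'' (Classical.arbitrary D)⟩
  exact Nat.card_eq_one_iff_unique.mpr ⟨inferInstance, inferInstance⟩

theorem L1_split {p : Perm D} {a b : D} (hab : a ≠ b) (h : p.SameCycle a b) :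
    z (swap a b * p) = z p + 1 := by
  have hq : ¬ (swap a b * p).SameCycle a b := X1 hab h
  have e1 : adj (scs (swap a b * p)) a b = adj (scs p) a b := adj_sc_eq
  have e2 : adj (scs p) a b = scs p := adj_eq_self h
  have := card_adj (s := scs (swap a b * p)) (a := a) (b := b) hq
  rw [e1, e2] at this
  unfold z
  omega

theorem L1_merge {p : Perm D} {a b : D} (hab : a ≠ b) (h : ¬ p.SameCycle a b) :
    z p = z (swap a b * p) + 1 ∧ (swap a b * p).SameCycle a b := by
  have hq : (swap a b * p).SameCycle a b := X2 hab h
  have e1 : adj (scs (swap a b * p)) a b = adj (scs p) a b := adj_sc_eq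
  have e2 : adj (scs (swap a b * p)) a b = scs (swap a b * p) := adj_eq_self hq
  have := card_adj (s := scs p) (a := a) (b := b) h
  rw [← e1, e2] at this
  unfold z
  exact ⟨this.symm, hq⟩

theorem mul_swap_eq {p : Perm D} {a b : D} : p * swap a b = swap (p a) (p b) * p := by
  rw [swap_apply_apply]; group

theorem L1_split_right {p : Perm D} {a b : D} (hab : a ≠ b) (h : p.SameCycle a b) :
    z (p * swap a b) = z p + 1 := by
  rw [mul_swap_eq]
  exact L1_split (fun e => hab (p.injective e))
    ((Perm.sameCycle_apply_right.mpr (Perm.sameCycle_apply_left.mpr h)))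

theorem sc_agree {p q : Perm D} {a b : D}
    (hag : ∀ x, p.SameCycle a x → q x = p x) (h : p.SameCycle a b) : q.SameCycle a b := by
  have key : ∀ k, (q ^ k) a = (p ^ k) a := by
    intro k
    induction k with
    | zero => rfl
    | succ i ih =>
      rw [pow_succ', Perm.mul_apply, ih, hag _ ⟨(i : ℤ), by simp⟩, ← Perm.mul_apply,
        ← pow_succ']
  obtain ⟨k, hk⟩ := (sc_iff_pow p a b).mp h
  exact (sc_iff_pow q a b).mpr ⟨k, by rw [key k, hk]⟩

/-- connectivity setoid of a pair of permutations -/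
def cstep (sg al : Perm D) (x y : D) : Prop := sg x = y ∨ al x = y

def conns (sg al : Perm D) : Setoid D :=
  ⟨Relation.EqvGen (cstep sg al), Relation.EqvGen.is_equivalence _⟩

noncomputable def cc (sg al : Perm D) : ℕ := Nat.card (Quotient (conns sg al))

theorem conns_sigma (sg al : Perm D) (x : D) : (conns sg al).r x (sg x) :=
  Relation.EqvGen.rel _ _ (Or.inl rfl)

theorem conns_alpha (sg al : Perm D) (x : D) : (conns sg al).r x (al x) :=
  Relation.EqvGen.rel _ _ (Or.inr rfl)

theorem conns_min {sg al : Perm D} (s : Setoid D) (hσ : ∀ y, s.r y (sg y))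
    (hα : ∀ y, s.r y (al y)) : ∀ x y, (conns sg al).r x y → s.r x y := by
  intro x y h
  induction h with
  | rel u v huv => rcases huv with h' | h'
                   · rw [← h']; exact hσ u
                   · rw [← h']; exact hα u
  | refl u => exact s.refl u
  | symm u v _ ih => exact s.symm ih
  | trans u v w _ _ ih1 ih2 => exact s.trans ih1 ih2

theorem sc_le_of_step {q : Perm D} {s : Setoid D} (hstep : ∀ w, s.r w (q w)) {u v : D}
    (h : q.SameCycle u v) : s.r u v := by
  have chain : ∀ k w, s.r w ((q ^ k) w) := by
    intro k
    induction k with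
    | zero => intro w; exact s.refl w
    | succ i ih =>
      intro w
      have e : (q ^ (i+1)) w = q ((q ^ i) w) := by rw [pow_succ', Perm.mul_apply]
      rw [e]; exact s.trans (ih w) (hstep _)
  obtain ⟨k, hk⟩ := (sc_iff_pow q u v).mp h
  rw [← hk]; exact chain k u

theorem sc_sigma_le_conns {sg al : Perm D} {u v : D} (h : sg.SameCycle u v) :
    (conns sg al).r u v :=
  sc_le_of_step (fun w => conns_sigma sg al w) h

theorem sc_mul_le_conns {sg al : Perm D} {u v : D} (h : (sg * al).SameCycle u v) :
    (conns sg al).r u v :=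
  sc_le_of_step (fun w => (conns sg al).trans (conns_alpha sg al w)
    (by simpa [Perm.mul_apply] using conns_sigma sg al (al w))) h

theorem z_one : z (1 : Perm D) = Fintype.card D := by
  have hb : Function.Bijective (fun x : D => (Quotient.mk'' x : Quotient (scs (1 : Perm D)))) := by
    constructor
    · intro x y h
      have h2 : (1 : Perm D).SameCycle x y := Quotient.exact' h
      obtain ⟨i, hi⟩ := h2
      simpa using hi
    · intro q
      induction q using Quotient.inductionOn' with
      | h x => exact ⟨x, rfl⟩
  rw [z, ← Nat.card_eq_fintype_card, Nat.card_eq_of_bijective _ hb]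

theorem cc_one (sg : Perm D) : cc sg 1 = z sg := by
  have : conns sg 1 = scs sg := by
    apply Setoid.ext; intro x y
    constructor
    · intro h
      refine conns_min (scs sg) (fun w => ⟨1, by simp⟩) (fun w => by simp only [Perm.one_apply]; exact Perm.SameCycle.refl sg w) x y h
    · intro h
      exact sc_sigma_le_conns h
  unfold cc z
  rw [this]

theorem thmA (sg : Perm D) (al : Perm D) :
    z sg + z al + z (sg * al) ≤ Fintype.card D + 2 * cc sg al := by
  classical
  suffices H : ∀ n (al : Perm D), (Finset.univ.filter fun x => al x ≠ x).card = n →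
      z sg + z al + z (sg * al) ≤ Fintype.card D + 2 * cc sg al from H _ al rfl
  intro n
  induction n using Nat.strong_induction_on with
  | _ n ih =>
    intro al hcard
    by_cases hfix : ∀ x, al x = x
    · have hal : al = 1 := Equiv.ext fun x => hfix x
      subst hal
      rw [z_one, cc_one, mul_one]
      omega
    · push_neg at hfix
      obtain ⟨x, hx⟩ := hfix
      have hxa : x ≠ al x := fun e => hx (e ▸ e.symm)
      set t := swap x (al x) with ht
      set al' := t * al with hal'
      have hsplit : z al' = z al + 1 := L1_split hxa ⟨1, by simp⟩
      have hal'x : al' x = x := by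
        rw [hal', Perm.mul_apply, ht, swap_apply_right]
      have hsupp : ∀ y, al' y ≠ y → al y ≠ y := by
        intro y hy hyy
        apply hy
        rw [hal', Perm.mul_apply, hyy, ht]
        rcases eq_or_ne y x with h1 | h1
        · exact absurd (h1 ▸ hyy) hx
        rcases eq_or_ne y (al x) with h2 | h2
        · exfalso
          apply hxa
          apply al.injective
          rw [← h2, hyy, h2]
        · exact swap_apply_of_ne_of_ne h1 h2
      have hmeas : (Finset.univ.filter fun y => al' y ≠ y).card < n := by
        rw [← hcard]
        apply Finset.card_lt_card
        constructor
        · intro y hy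
          simp only [Finset.mem_filter, Finset.mem_univ, true_and] at hy ⊢
          exact hsupp y hy
        · intro hsub
          have := hsub (Finset.mem_filter.mpr ⟨Finset.mem_univ x, hx⟩)
          simp only [Finset.mem_filter, Finset.mem_univ, true_and] at this
          exact this hal'x
      have IH := ih _ hmeas al' rfl
      have halt : al = t * al' := by rw [hal', ← mul_assoc, ht, swap_mul_self, one_mul]
      have hσne : sg x ≠ sg (al x) := fun e => hxa (sg.injective e)
      set t' := swap (sg x) (sg (al x)) with ht'
      have e2 : sg * t = t' * sg := by rw [ht, ht']; exact mul_swap_eq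
      have e1 : sg * al = t' * (sg * al') := by
        rw [halt, ← mul_assoc, e2, mul_assoc]
      by_cases hcase : (conns sg al').r x (al x)
      · -- components unchanged
        have hcs : conns sg al = conns sg al' := by
          apply Setoid.ext; intro u v
          constructor
          · intro h
            refine conns_min (conns sg al') (fun w => conns_sigma _ _ w) ?_ u v h
            intro w
            have hw : al w = t (al' w) := by rw [halt, Perm.mul_apply]
            rw [hw, ht]
            rcases eq_or_ne (al' w) x with h1 | h1
            · rw [h1, swap_apply_left]
              exact (conns sg al').trans (h1 ▸ conns_alpha sg al' w) hcase
            rcases eq_or_ne (al' w) (al x) with h2 | h2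
            · rw [h2, swap_apply_right]
              exact (conns sg al').trans (h2 ▸ conns_alpha sg al' w) ((conns sg al').symm hcase)
            · rw [swap_apply_of_ne_of_ne h1 h2]
              exact conns_alpha sg al' w
          · intro h
            refine conns_min (conns sg al) (fun w => conns_sigma _ _ w) ?_ u v h
            intro w
            have hw : al' w = t (al w) := by rw [hal', Perm.mul_apply]
            rw [hw, ht]
            have hxax : (conns sg al).r x (al x) := conns_alpha sg al x
            rcases eq_or_ne (al w) x with h1 | h1
            · rw [h1, swap_apply_left]
              exact (conns sg al).trans (h1 ▸ conns_alpha sg al w) hxax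
            rcases eq_or_ne (al w) (al x) with h2 | h2
            · rw [h2, swap_apply_right]
              exact (conns sg al).trans (h2 ▸ conns_alpha sg al w) ((conns sg al).symm hxax)
            · rw [swap_apply_of_ne_of_ne h1 h2]
              exact conns_alpha sg al w
        have hzb : z (sg * al) ≤ z (sg * al') + 1 := by
          by_cases hsc : (sg * al').SameCycle (sg x) (sg (al x))
          · rw [e1, ht', L1_split hσne hsc]
          · obtain ⟨hm, -⟩ := L1_merge hσne hsc
            rw [e1, ht']
            omega
        have hceq : cc sg al = cc sg al' := by unfold cc; rw [hcs]
        omega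
      · -- merge case
        have hp' : ¬ (sg * al').SameCycle (sg x) (sg (al x)) := by
          intro hsc
          apply hcase
          have h1 : (conns sg al').r (sg x) (sg (al x)) := sc_mul_le_conns hsc
          exact (conns sg al').trans (conns_sigma sg al' x)
            ((conns sg al').trans h1 ((conns sg al').symm (conns_sigma sg al' (al x))))
        obtain ⟨hm, -⟩ := L1_merge hσne hp'
        have hzm : z (sg * al') = z (sg * al) + 1 := by rw [e1, ht']; exact hm
        have hcs : conns sg al = adj (conns sg al') x (al x) := by
          apply Setoid.ext; intro u v
          constructor
          · intro h
            refine conns_min (adj (conns sg al') x (al x)) (fun w => Or.inl (conns_sigma _ _ w)) ?_ u v h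
            intro w
            have hw : al w = t (al' w) := by rw [halt, Perm.mul_apply]
            rw [hw, ht]
            have hwrel : (adj (conns sg al') x (al x)).r w (al' w) := Or.inl (conns_alpha sg al' w)
            rcases eq_or_ne (al' w) x with h1 | h1
            · rw [h1, swap_apply_left]
              exact (adj (conns sg al') x (al x)).trans hwrel (h1 ▸ adj_ab _ _ _)
            rcases eq_or_ne (al' w) (al x) with h2 | h2
            · rw [h2, swap_apply_right]
              exact (adj (conns sg al') x (al x)).trans hwrel
                (h2 ▸ (adj (conns sg al') x (al x)).symm (adj_ab _ _ _))
            · rw [swap_apply_of_ne_of_ne h1 h2]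
              exact hwrel
          · intro h
            have hsub : ∀ u v, (conns sg al').r u v → (conns sg al).r u v := by
              intro u v h'
              refine conns_min (conns sg al) (fun w => conns_sigma _ _ w) ?_ u v h'
              intro w
              have hw : al' w = t (al w) := by rw [hal', Perm.mul_apply]
              rw [hw, ht]
              have hxax : (conns sg al).r x (al x) := conns_alpha sg al x
              rcases eq_or_ne (al w) x with h1 | h1
              · rw [h1, swap_apply_left]
                exact (conns sg al).trans (h1 ▸ conns_alpha sg al w) hxax
              rcases eq_or_ne (al w) (al x) with h2 | h2
              · rw [h2, swap_apply_right]
                exact (conns sg al).trans (h2 ▸ conns_alpha sg al w) ((conns sg al).symm hxax)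
              · rw [swap_apply_of_ne_of_ne h1 h2]
                exact conns_alpha sg al w
            have hxax : (conns sg al).r x (al x) := conns_alpha sg al x
            rcases h with h' | ⟨h1', h2'⟩ | ⟨h1', h2'⟩
            · exact hsub _ _ h'
            · exact (conns sg al).trans (hsub _ _ h1')
                ((conns sg al).trans hxax (hsub _ _ h2'))
            · exact (conns sg al).trans (hsub _ _ h1')
                ((conns sg al).trans ((conns sg al).symm hxax) (hsub _ _ h2'))
        have hccm : cc sg al + 1 = cc sg al' := by
          have h2 := card_adj (s := conns sg al') (a := x) (b := al x) hcase
          unfold cc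
          rw [hcs]
          exact h2
        omega

theorem subtypePerm_pow (p : Perm D) {P : D → Prop} (hP : ∀ x, P x ↔ P (p x)) (k : ℕ)
    (x : {a // P a}) : (((p.subtypePerm (fun x => (hP x).symm)) ^ k) x : D) = (p ^ k) (x : D) := by
  induction k with
  | zero => rfl
  | succ i ih =>
    rw [pow_succ', pow_succ', Perm.mul_apply, Perm.mul_apply]
    have : ((p.subtypePerm (fun x => (hP x).symm)) (((p.subtypePerm (fun x => (hP x).symm)) ^ i) x) : D) =
        p ((((p.subtypePerm (fun x => (hP x).symm)) ^ i) x : D)) := rfl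
    rw [this, ih]

theorem sc_subtype_iff (p : Perm D) {P : D → Prop} (hP : ∀ x, P x ↔ P (p x))
    (x y : {a // P a}) : (p.subtypePerm (fun x => (hP x).symm)).SameCycle x y ↔ p.SameCycle (x : D) (y : D) := by
  constructor
  · intro h
    obtain ⟨k, hk⟩ := (sc_iff_pow _ x y).mp h
    refine (sc_iff_pow p x y).mpr ⟨k, ?_⟩
    rw [← subtypePerm_pow p hP k x, hk]
  · intro h
    obtain ⟨k, hk⟩ := (sc_iff_pow p _ _).mp h
    refine (sc_iff_pow _ x y).mpr ⟨k, ?_⟩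
    apply Subtype.ext
    rw [subtypePerm_pow p hP k x, hk]

theorem P_of_sc {p : Perm D} {P : D → Prop} (hP : ∀ x, P x ↔ P (p x)) {x y : D}
    (h : p.SameCycle x y) (hx : P x) : P y := by
  obtain ⟨k, hk⟩ := (sc_iff_pow p x y).mp h
  rw [← hk]; clear hk
  induction k with
  | zero => exact hx
  | succ i ih =>
    rw [pow_succ', Perm.mul_apply]
    exact (hP _).mp ih

theorem z_add (p : Perm D) {P : D → Prop} (hP : ∀ x, P x ↔ P (p x)) :
    z p = z (p.subtypePerm (fun x => (hP x).symm)) +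
      z (p.subtypePerm (fun x => not_iff_not.mpr (hP x).symm) : Perm {a // ¬ P a}) := by
  classical
  set pA := p.subtypePerm (fun x => (hP x).symm)
  set pB := (p.subtypePerm (fun x => not_iff_not.mpr (hP x).symm) : Perm {a // ¬ P a})
  let g : Quotient (scs pA) ⊕ Quotient (scs pB) → Quotient (scs p) :=
    Sum.elim
      (fun q => q.liftOn' (fun x => Quotient.mk'' (x : D))
        (fun x y hxy => Quotient.sound' ((sc_subtype_iff p hP x y).mp hxy)))
      (fun q => q.liftOn' (fun x => Quotient.mk'' (x : D))
        (fun x y hxy => Quotient.sound' ((sc_subtype_iff p (fun x => not_iff_not.mpr (hP x)) x y).mp hxy)))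
  have hbij : Function.Bijective g := by
    constructor
    · rintro (q1 | q1) (q2 | q2) hg
      · induction q1 using Quotient.inductionOn' with
        | h x =>
        induction q2 using Quotient.inductionOn' with
        | h y =>
        have : p.SameCycle (x : D) (y : D) := Quotient.exact' hg
        exact congrArg Sum.inl (Quotient.sound' ((sc_subtype_iff p hP x y).mpr this))
      · induction q1 using Quotient.inductionOn' with
        | h x =>
        induction q2 using Quotient.inductionOn' with
        | h y =>
        have hsc : p.SameCycle (x : D) (y : D) := Quotient.exact' hg
        exact absurd (P_of_sc hP hsc x.2) y.2
      · induction q1 using Quotient.inductionOn' with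
        | h x =>
        induction q2 using Quotient.inductionOn' with
        | h y =>
        have hsc : p.SameCycle (y : D) (x : D) := (Quotient.exact' hg).symm
        exact absurd (P_of_sc hP hsc y.2) x.2
      · induction q1 using Quotient.inductionOn' with
        | h x =>
        induction q2 using Quotient.inductionOn' with
        | h y =>
        have : p.SameCycle (x : D) (y : D) := Quotient.exact' hg
        exact congrArg Sum.inr (Quotient.sound' ((sc_subtype_iff p (fun x => not_iff_not.mpr (hP x)) x y).mpr this))
    · intro q
      induction q using Quotient.inductionOn' with
      | h x =>
      by_cases hx : P x
      · exact ⟨Sum.inl (Quotient.mk'' ⟨x, hx⟩), rfl⟩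
      · exact ⟨Sum.inr (Quotient.mk'' ⟨x, hx⟩), rfl⟩
  have := Nat.card_eq_of_bijective g hbij
  rw [z, ← this, Nat.card_sum, z, z]

theorem subtypePerm_mul (p q : Perm D) {P : D → Prop} (hp : ∀ x, P x ↔ P (p x))
    (hq : ∀ x, P x ↔ P (q x)) :
    (p.subtypePerm (fun x => (hp x).symm)) * (q.subtypePerm (fun x => (hq x).symm)) =
      (p * q).subtypePerm (fun x => ((hq x).trans (hp (q x))).symm) := by
  ext x
  rfl

theorem conns_iff_P {sg al : Perm D} {P : D → Prop} (hs : ∀ x, P x ↔ P (sg x))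
    (ha : ∀ x, P x ↔ P (al x)) {x y : D} (h : (conns sg al).r x y) : P x ↔ P y := by
  induction h with
  | rel u v huv => rcases huv with h' | h'
                   · rw [← h']; exact hs u
                   · rw [← h']; exact ha u
  | refl u => rfl
  | symm u v _ ih => exact ih.symm
  | trans u v w _ _ ih1 ih2 => exact ih1.trans ih2

theorem conns_restrict {sg al : Perm D} {P : D → Prop} (hs : ∀ x, P x ↔ P (sg x))
    (ha : ∀ x, P x ↔ P (al x)) {x y : D} (h : (conns sg al).r x y) :
    ∀ (hx : P x) (hy : P y),
      (conns (sg.subtypePerm (fun x => (hs x).symm)) (al.subtypePerm (fun x => (ha x).symm))).r ⟨x, hx⟩ ⟨y, hy⟩ := by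
  induction h with
  | rel u v huv =>
    intro hu hv
    rcases huv with h' | h'
    · exact Relation.EqvGen.rel _ _ (Or.inl (Subtype.ext h'))
    · exact Relation.EqvGen.rel _ _ (Or.inr (Subtype.ext h'))
  | refl u => intro hu hv; exact (conns _ _).refl _
  | symm u v hr ih =>
    intro hu hv
    exact (conns _ _).symm (ih hv hu)
  | trans u v w hr1 hr2 ih1 ih2 =>
    intro hu hw
    have hv : P v := conns_iff_P hs ha hr1 |>.mp hu
    exact (conns _ _).trans (ih1 hu hv) (ih2 hv hw)

theorem z_involution {al : Perm D} (hinv : ∀ x, al (al x) = x) (hffp : ∀ x, al x ≠ x) :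
    2 * z al = Fintype.card D := by
  classical
  have hpow : ∀ k x, (al ^ k) x = x ∨ (al ^ k) x = al x := by
    intro k x
    induction k with
    | zero => exact Or.inl rfl
    | succ i ih =>
      rw [pow_succ', Perm.mul_apply]
      rcases ih with h | h
      · rw [h]; exact Or.inr rfl
      · rw [h, hinv]; exact Or.inl rfl
  have hsc : ∀ x y, al.SameCycle x y ↔ (y = x ∨ y = al x) := by
    intro x y
    constructor
    · intro h
      obtain ⟨k, hk⟩ := (sc_iff_pow al x y).mp h
      rcases hpow k x with h' | h' <;> rw [hk] at h'
      · exact Or.inl h'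
      · exact Or.inr h'
    · rintro (rfl | rfl)
      · exact Perm.SameCycle.refl al y
      · exact ⟨1, by simp⟩
  have hcardfib : ∀ q : Quotient (scs al),
      (Finset.univ.filter fun x => (Quotient.mk'' x : Quotient (scs al)) = q).card = 2 := by
    intro q
    induction q using Quotient.inductionOn' with
    | h y =>
    have : (Finset.univ.filter fun x => (Quotient.mk'' x : Quotient (scs al)) = Quotient.mk'' y)
        = {y, al y} := by
      ext x
      simp only [Finset.mem_filter, Finset.mem_univ, true_and, Finset.mem_insert,
        Finset.mem_singleton]
      constructor
      · intro h
        have := Quotient.exact' h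
        rcases (hsc x y).mp this with h' | h'
        · left; rw [← h']
        · right; apply al.injective; rw [← h', hinv]
      · rintro (rfl | rfl)
        · rfl
        · exact Quotient.sound' ((hsc (al y) y).mpr (Or.inr (by rw [hinv])))
    rw [this, Finset.card_insert_of_notMem (by simp only [Finset.mem_singleton]; exact fun h => hffp y h.symm),
      Finset.card_singleton]
  have := Finset.card_eq_sum_card_fiberwise
    (f := fun x : D => (Quotient.mk'' x : Quotient (scs al))) (s := Finset.univ)
    (t := Finset.univ) (fun x _ => Finset.mem_univ _)
  rw [Finset.card_univ] at this
  rw [this, Finset.sum_congr rfl (fun q _ => hcardfib q), Finset.sum_const, Finset.card_univ,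
    smul_eq_mul, z, Nat.card_eq_fintype_card, mul_comm]

theorem z_order3 {ph : Perm D} (h3 : ∀ x, ph (ph (ph x)) = x) (hne : ∀ x, ph x ≠ x) :
    3 * z ph = Fintype.card D := by
  classical
  have h2ne : ∀ x, ph (ph x) ≠ x := by
    intro x h
    have := h3 x
    rw [h] at this
    exact hne x this
  have hpow : ∀ k x, (ph ^ k) x = x ∨ (ph ^ k) x = ph x ∨ (ph ^ k) x = ph (ph x) := by
    intro k x
    induction k with
    | zero => exact Or.inl rfl
    | succ i ih =>
      rw [pow_succ', Perm.mul_apply]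
      rcases ih with h | h | h
      · rw [h]; exact Or.inr (Or.inl rfl)
      · rw [h]; exact Or.inr (Or.inr rfl)
      · rw [h, h3]; exact Or.inl rfl
  have hsc : ∀ x y, ph.SameCycle x y ↔ (y = x ∨ y = ph x ∨ y = ph (ph x)) := by
    intro x y
    constructor
    · intro h
      obtain ⟨k, hk⟩ := (sc_iff_pow ph x y).mp h
      rcases hpow k x with h' | h' | h' <;> rw [hk] at h'
      · exact Or.inl h'
      · exact Or.inr (Or.inl h')
      · exact Or.inr (Or.inr h')
    · rintro (rfl | rfl | rfl)
      · exact Perm.SameCycle.refl ph y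
      · exact ⟨1, by simp⟩
      · exact ⟨2, by rw [zpow_two, Perm.mul_apply]⟩
  have hcardfib : ∀ q : Quotient (scs ph),
      (Finset.univ.filter fun x => (Quotient.mk'' x : Quotient (scs ph)) = q).card = 3 := by
    intro q
    induction q using Quotient.inductionOn' with
    | h y =>
    have hset : (Finset.univ.filter fun x =>
        (Quotient.mk'' x : Quotient (scs ph)) = Quotient.mk'' y) = {y, ph y, ph (ph y)} := by
      ext x
      simp only [Finset.mem_filter, Finset.mem_univ, true_and, Finset.mem_insert,
        Finset.mem_singleton]
      constructor
      · intro h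
        have := Quotient.exact' h
        rcases (hsc x y).mp this with h' | h' | h'
        · left; rw [← h']
        · right; right
          rw [h', h3]
        · right; left
          rw [h', h3]
      · rintro (rfl | rfl | rfl)
        · rfl
        · exact Quotient.sound' ((hsc (ph y) y).mpr (Or.inr (Or.inr (by rw [h3]))))
        · exact Quotient.sound' ((hsc (ph (ph y)) y).mpr (Or.inr (Or.inl (by rw [h3]))))
    rw [hset]
    rw [Finset.card_insert_of_notMem, Finset.card_insert_of_notMem, Finset.card_singleton]
    · simp only [Finset.mem_singleton]
      intro h
      exact hne y (ph.injective h).symm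
    · simp only [Finset.mem_insert, Finset.mem_singleton]
      push_neg
      exact ⟨fun h => hne y h.symm, fun h => h2ne y h.symm⟩
  have := Finset.card_eq_sum_card_fiberwise
    (f := fun x : D => (Quotient.mk'' x : Quotient (scs ph)) ) (s := Finset.univ)
    (t := Finset.univ) (fun x _ => Finset.mem_univ _)
  rw [Finset.card_univ] at this
  rw [this, Finset.sum_congr rfl (fun q _ => hcardfib q), Finset.sum_const, Finset.card_univ,
    smul_eq_mul, z, Nat.card_eq_fintype_card, mul_comm]

theorem eq_of_card_two {Q : Type} [Finite Q] (h : Nat.card Q = 2) {a b : Q} (hab : a ≠ b)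
    (cq : Q) : cq = a ∨ cq = b := by
  classical
  letI := Fintype.ofFinite Q
  by_contra hc
  push_neg at hc
  have hsub : ({a, b, cq} : Finset Q) ⊆ Finset.univ := Finset.subset_univ _
  have hcard : ({a, b, cq} : Finset Q).card = 3 := by
    rw [Finset.card_insert_of_notMem, Finset.card_insert_of_notMem, Finset.card_singleton]
    · simp only [Finset.mem_singleton]
      exact fun h' => hc.2 h'.symm
    · simp only [Finset.mem_insert, Finset.mem_singleton]
      push_neg
      exact ⟨hab, fun h' => hc.1 h'.symm⟩
  have := Finset.card_le_card hsub
  rw [hcard, Finset.card_univ, ← Nat.card_eq_fintype_card, h] at this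
  omega

theorem exists_third_class {Q : Type} [Finite Q] (h : 3 ≤ Nat.card Q) (a b : Q) :
    ∃ cq : Q, cq ≠ a ∧ cq ≠ b := by
  classical
  letI := Fintype.ofFinite Q
  by_contra hc
  push_neg at hc
  have hsub : (Finset.univ : Finset Q) ⊆ {a, b} := by
    intro x _
    simp only [Finset.mem_insert, Finset.mem_singleton]
    by_contra hx
    push_neg at hx
    exact hx.2 (hc x hx.1)
  have := Finset.card_le_card hsub
  have h2 : ({a, b} : Finset Q).card ≤ 2 := Finset.card_insert_le _ _ |>.trans (by simp)
  rw [Finset.card_univ, ← Nat.card_eq_fintype_card] at this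
  omega

def parallel (sg al : Perm D) (x y : D) : Prop :=
  sg.SameCycle x y ∧ sg.SameCycle (al x) (al y)

def simpleDart (sg al : Perm D) (d : D) : Prop := ∀ d', parallel sg al d' d → d' = d

def pairEq (sg al : Perm D) (x y : D) : Prop :=
  (sg.SameCycle x y ∧ sg.SameCycle (al x) (al y)) ∨
  (sg.SameCycle x (al y) ∧ sg.SameCycle (al x) y)

def mapHyps (D : Type) [Fintype D] (sg al : Perm D) : Prop :=
  (∀ x, al (al x) = x) ∧ (∀ x, al x ≠ x) ∧ (∀ x, ¬ sg.SameCycle x (al x)) ∧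
  (∀ x y, (conns sg al).r x y) ∧ (∀ x, sg (al (sg (al (sg (al x))))) = x) ∧
  (∀ x, sg (al x) ≠ x) ∧ (z sg + z al + z (sg * al) = Fintype.card D + 2)

noncomputable def cutS (al : Perm D) (d1 d2 : D) : Perm D := swap d1 d2 * swap (al d1) (al d2)

theorem cutS_symm (al : Perm D) (d1 d2 : D) : cutS al d2 d1 = cutS al d1 d2 := by
  unfold cutS
  rw [swap_comm d2 d1, swap_comm (al d2) (al d1)]

theorem pieceLemma {D : Type} [Fintype D] [Nonempty D] (sg al : Perm D)
    (hmh : mapHyps D sg al)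
    (IH : ∀ (E : Type) [Fintype E] [Nonempty E], Fintype.card E < Fintype.card D →
      ∀ (sgE alE : Perm E), mapHyps E sgE alE →
      ∀ bE : E, ∃ dE : E, simpleDart sgE alE dE ∧ ¬ pairEq sgE alE dE bE)
    (d1 d2 : D) (hne12 : d1 ≠ d2) (hpar : parallel sg al d1 d2) :
    ¬ (conns (sg * cutS al d1 d2) (al * cutS al d1 d2)).r d1 d2 ∧
    ∃ x, simpleDart sg al x ∧
      (conns (sg * cutS al d1 d2) (al * cutS al d1 d2)).r x d1 ∧
      (conns (sg * cutS al d1 d2) (al * cutS al d1 d2)).r (al x) d1 ∧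
      ∃ w, (w = x ∨ w = al x) ∧
        (∀ v, sg.SameCycle w v → (conns (sg * cutS al d1 d2) (al * cutS al d1 d2)).r v d1) := by
  classical
  obtain ⟨hinv, hffp, hloop, hconn, htri, hne2, heuler⟩ := hmh
  set s := cutS al d1 d2 with hsdef
  set sg' := sg * s with hsg'def
  set al' := al * s with hal'def
  have hsg'app : ∀ w, sg' w = sg (s w) := fun w => rfl
  have hal'app : ∀ w, al' w = al (s w) := fun w => rfl
  have hs_apply : ∀ w, s w = swap d1 d2 (swap (al d1) (al d2) w) := fun w => rfl
  -- distinctness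
  have hd1e1 : d1 ≠ al d1 := by
    intro h
    exact hloop d1 ⟨0, by simpa using h⟩
  have hd2e2 : d2 ≠ al d2 := by
    intro h
    exact hloop d2 ⟨0, by simpa using h⟩
  have hd1e2 : d1 ≠ al d2 := by
    intro h
    exact hloop d2 (h ▸ hpar.1.symm)
  have hd2e1 : d2 ≠ al d1 := by
    intro h
    exact hloop d1 (h ▸ hpar.1)
  have he1e2 : al d1 ≠ al d2 := fun h => hne12 (al.injective h)
  -- applications of s
  have hs_d1 : s d1 = d2 := by
    rw [hs_apply, swap_apply_of_ne_of_ne hd1e1 hd1e2, swap_apply_left]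
  have hs_d2 : s d2 = d1 := by
    rw [hs_apply, swap_apply_of_ne_of_ne hd2e1 hd2e2, swap_apply_right]
  have hs_e1 : s (al d1) = al d2 := by
    rw [hs_apply, swap_apply_left, swap_apply_of_ne_of_ne (Ne.symm hd1e2) (Ne.symm hd2e2)]
  have hs_e2 : s (al d2) = al d1 := by
    rw [hs_apply, swap_apply_right, swap_apply_of_ne_of_ne (Ne.symm hd1e1) (Ne.symm hd2e1)]
  have hs_other : ∀ w, w ≠ d1 → w ≠ d2 → w ≠ al d1 → w ≠ al d2 → s w = w := by
    intro w h1 h2 h3 h4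
    rw [hs_apply, swap_apply_of_ne_of_ne h3 h4, swap_apply_of_ne_of_ne h1 h2]
  have hal_ne : ∀ w, w ≠ d1 → w ≠ d2 → w ≠ al d1 → w ≠ al d2 →
      (al w ≠ d1 ∧ al w ≠ d2 ∧ al w ≠ al d1 ∧ al w ≠ al d2) := by
    intro w h1 h2 h3 h4
    refine ⟨?_, ?_, ?_, ?_⟩
    · intro h; apply h3; rw [← hinv w, h]
    · intro h; apply h4; rw [← hinv w, h]
    · intro h; exact h1 (al.injective h)
    · intro h; exact h2 (al.injective h)
  have hss : ∀ w, s (s w) = w := by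
    intro w
    by_cases h1 : w = d1; · rw [h1, hs_d1, hs_d2]
    by_cases h2 : w = d2; · rw [h2, hs_d2, hs_d1]
    by_cases h3 : w = al d1; · rw [h3, hs_e1, hs_e2]
    by_cases h4 : w = al d2; · rw [h4, hs_e2, hs_e1]
    rw [hs_other w h1 h2 h3 h4, hs_other w h1 h2 h3 h4]
  have hcomm : ∀ w, s (al w) = al (s w) := by
    intro w
    by_cases h1 : w = d1
    · rw [h1, hs_d1, hs_e1]
    by_cases h2 : w = d2
    · rw [h2, hs_d2, hs_e2]
    by_cases h3 : w = al d1
    · rw [h3, hs_e1, hinv, hinv, hs_d1]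
    by_cases h4 : w = al d2
    · rw [h4, hs_e2, hinv, hinv, hs_d2]
    · obtain ⟨g1, g2, g3, g4⟩ := hal_ne w h1 h2 h3 h4
      rw [hs_other _ g1 g2 g3 g4, hs_other w h1 h2 h3 h4]
  have hal'_d1 : al' d1 = al d2 := by rw [hal'app, hs_d1]
  have hal'_d2 : al' d2 = al d1 := by rw [hal'app, hs_d2]
  have hal'_e1 : al' (al d1) = d2 := by rw [hal'app, hs_e1, hinv]
  have hal'_e2 : al' (al d2) = d1 := by rw [hal'app, hs_e2, hinv]
  have hal'_other : ∀ w, w ≠ d1 → w ≠ d2 → w ≠ al d1 → w ≠ al d2 → al' w = al w := by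
    intro w h1 h2 h3 h4
    rw [hal'app, hs_other w h1 h2 h3 h4]
  have hphi : ∀ w, sg' (al' w) = sg (al w) := by
    intro w
    rw [hsg'app, hal'app, ← hcomm, hss]
  have hinv' : ∀ w, al' (al' w) = w := by
    intro w
    rw [hal'app w, hal'app (al (s w)), hcomm, hss, hinv]
  have hffp' : ∀ w, al' w ≠ w := by
    intro w
    by_cases h1 : w = d1; · rw [h1, hal'_d1]; exact Ne.symm hd1e2
    by_cases h2 : w = d2; · rw [h2, hal'_d2]; exact Ne.symm hd2e1
    by_cases h3 : w = al d1; · rw [h3, hal'_e1]; exact hd2e1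
    by_cases h4 : w = al d2; · rw [h4, hal'_e2]; exact hd1e2
    · rw [hal'_other w h1 h2 h3 h4]; exact hffp w
  -- z computations
  have hzsg' : z sg' = z sg + 2 := by
    have hstep1 : z (sg * swap d1 d2) = z sg + 1 := L1_split_right hne12 hpar.1
    have hagree : ∀ v, sg.SameCycle (al d1) v → (sg * swap d1 d2) v = sg v := by
      intro v hv
      have hv1 : v ≠ d1 := fun h => hloop d1 ((h ▸ hv).symm)
      have hv2 : v ≠ d2 := fun h => hloop d2 (((h ▸ hv).symm).trans hpar.2)
      rw [Perm.mul_apply, swap_apply_of_ne_of_ne hv1 hv2]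
    have hstep2sc : (sg * swap d1 d2).SameCycle (al d1) (al d2) := sc_agree hagree hpar.2
    have hmulass : sg' = (sg * swap d1 d2) * swap (al d1) (al d2) := by
      simp only [hsg'def, hsdef, cutS, mul_assoc]
    rw [hmulass, L1_split_right he1e2 hstep2sc, hstep1]
  have hzal2 : 2 * z al = Fintype.card D := z_involution hinv hffp
  have hzal'2 : 2 * z al' = Fintype.card D := z_involution hinv' hffp'
  have hzal' : z al' = z al := by omega
  have hphiperm : sg' * al' = sg * al := Equiv.ext fun w => hphi w
  have heuler' : z sg' + z al' + z (sg' * al') = Fintype.card D + 4 := by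
    rw [hzsg', hzal', hphiperm]
    omega
  -- components
  have hccge : Fintype.card D + 4 ≤ Fintype.card D + 2 * cc sg' al' := by
    rw [← heuler']
    exact thmA sg' al'
  have he1d2conn : (conns sg' al').r (al d1) d2 := by
    have := conns_alpha sg' al' (al d1)
    rwa [hal'_e1] at this
  have hd1e2conn : (conns sg' al').r d1 (al d2) := by
    have := conns_alpha sg' al' d1
    rwa [hal'_d1] at this
  have hadjall : ∀ u v, (adj (conns sg' al') d1 d2).r u v := by
    intro u v
    have he1e2adj : (adj (conns sg' al') d1 d2).r (al d1) (al d2) := by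
      refine (adj (conns sg' al') d1 d2).trans (Or.inl he1d2conn) ?_
      refine (adj (conns sg' al') d1 d2).trans
        ((adj (conns sg' al') d1 d2).symm (adj_ab _ _ _)) ?_
      exact Or.inl hd1e2conn
    have hstep_s : ∀ w, (adj (conns sg' al') d1 d2).r w (s w) := by
      intro w
      by_cases h1 : w = d1
      · rw [h1, hs_d1]; exact adj_ab _ _ _
      by_cases h2 : w = d2
      · rw [h2, hs_d2]; exact (adj (conns sg' al') d1 d2).symm (adj_ab _ _ _)
      by_cases h3 : w = al d1
      · rw [h3, hs_e1]; exact he1e2adj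
      by_cases h4 : w = al d2
      · rw [h4, hs_e2]; exact (adj (conns sg' al') d1 d2).symm he1e2adj
      · rw [hs_other w h1 h2 h3 h4]
    refine conns_min (adj (conns sg' al') d1 d2) ?_ ?_ u v (hconn u v)
    · intro w
      have hsg : sg w = sg' (s w) := by rw [hsg'app, hss]
      rw [hsg]
      exact (adj (conns sg' al') d1 d2).trans (hstep_s w) (Or.inl (conns_sigma sg' al' (s w)))
    · intro w
      have hal : al w = al' (s w) := by rw [hal'app, hss]
      rw [hal]
      exact (adj (conns sg' al') d1 d2).trans (hstep_s w) (Or.inl (conns_alpha sg' al' (s w)))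
  have hcomp : ¬ (conns sg' al').r d1 d2 := by
    intro h
    have hallc : ∀ u v, (conns sg' al').r u v := by
      intro u v
      have := hadjall u v
      rwa [adj_eq_self h] at this
    have h1 : cc sg' al' = 1 := card_quot_one hallc
    omega
  have hcc2 : cc sg' al' = 2 := by
    have h1 : Nat.card (Quotient (adj (conns sg' al') d1 d2)) = 1 := card_quot_one hadjall
    have h2 := card_adj (s := conns sg' al') (a := d1) (b := d2) hcomp
    unfold cc
    omega
  have hall2 : ∀ w, (conns sg' al').r w d1 ∨ (conns sg' al').r w d2 := by
    intro w
    have hne : (Quotient.mk'' d1 : Quotient (conns sg' al')) ≠ Quotient.mk'' d2 :=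
      fun h => hcomp (Quotient.exact' h)
    rcases eq_of_card_two hcc2 hne (Quotient.mk'' w) with h | h
    · exact Or.inl (Quotient.exact' h)
    · exact Or.inr (Quotient.exact' h)
  set A : D → Prop := fun w => (conns sg' al').r w d1 with hAdef
  have hAsg' : ∀ w, A w ↔ A (sg' w) :=
    fun w => ⟨fun h => (conns sg' al').trans ((conns sg' al').symm (conns_sigma sg' al' w)) h,
      fun h => (conns sg' al').trans (conns_sigma sg' al' w) h⟩
  have hAal' : ∀ w, A w ↔ A (al' w) :=
    fun w => ⟨fun h => (conns sg' al').trans ((conns sg' al').symm (conns_alpha sg' al' w)) h,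
      fun h => (conns sg' al').trans (conns_alpha sg' al' w) h⟩
  have hAd1 : A d1 := (conns sg' al').refl d1
  have hAe2 : A (al d2) := (conns sg' al').symm hd1e2conn
  have hBd2 : ¬ A d2 := fun h => hcomp ((conns sg' al').symm h)
  have hBe1 : ¬ A (al d1) := fun h => hcomp ((conns sg' al').symm
    ((conns sg' al').trans ((conns sg' al').symm he1d2conn) h))
  have hnA : ∀ w, ¬ A w ↔ (conns sg' al').r w d2 := by
    intro w
    constructor
    · intro h
      rcases hall2 w with h' | h'
      · exact absurd h' h
      · exact h'
    · intro h hA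
      exact hcomp ((conns sg' al').trans ((conns sg' al').symm hA) h)
  -- cycle transfer facts
  have F1 : ∀ u v, sg'.SameCycle u v → sg.SameCycle u v := by
    intro u v h
    refine sc_le_of_step (s := scs sg) ?_ h
    intro w
    have hws : sg.SameCycle w (s w) := by
      by_cases h1 : w = d1
      · rw [h1, hs_d1]; exact hpar.1
      by_cases h2 : w = d2
      · rw [h2, hs_d2]; exact hpar.1.symm
      by_cases h3 : w = al d1
      · rw [h3, hs_e1]; exact hpar.2
      by_cases h4 : w = al d2
      · rw [h4, hs_e2]; exact hpar.2.symm
      · rw [hs_other w h1 h2 h3 h4]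
    rw [hsg'app]
    exact (scs sg).trans hws ⟨1, by simp⟩
  have hnotin_u : ∀ v, sg.SameCycle v d1 → v ≠ al d1 ∧ v ≠ al d2 := by
    intro v hv
    refine ⟨fun h => hloop d1 ((h ▸ hv).symm), fun h => hloop d2 ?_⟩
    have h2 : sg.SameCycle (al d2) d1 := h ▸ hv
    exact (h2.trans hpar.1).symm
  have hnotin_v : ∀ v, sg.SameCycle v (al d1) → v ≠ d1 ∧ v ≠ d2 := by
    intro v hv
    refine ⟨fun h => hloop d1 (h ▸ hv), fun h => hloop d2 ?_⟩
    have h2 : sg.SameCycle d2 (al d1) := h ▸ hv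
    exact h2.trans hpar.2
  have Fsplit : ∀ w, sg.SameCycle w d1 → (sg'.SameCycle w d1 ∨ sg'.SameCycle w d2) := by
    intro w hw
    obtain ⟨k0, hk0⟩ := (sc_iff_pow sg w d1).mp hw
    have hex : ∃ k, (sg ^ k) w = d1 ∨ (sg ^ k) w = d2 := ⟨k0, Or.inl hk0⟩
    have hk : (sg ^ Nat.find hex) w = d1 ∨ (sg ^ Nat.find hex) w = d2 := Nat.find_spec hex
    have key : ∀ j, j ≤ Nat.find hex → (sg' ^ j) w = (sg ^ j) w := by
      intro j hj
      induction j with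
      | zero => rfl
      | succ i ih =>
        have hi : i < Nat.find hex := by omega
        have hpow : sg.SameCycle w ((sg ^ i) w) := ⟨(i : ℤ), by simp⟩
        have hcyc2 : sg.SameCycle ((sg ^ i) w) d1 := hpow.symm.trans hw
        obtain ⟨hne1, hne2'⟩ := hnotin_u _ hcyc2
        have hnd1 : (sg ^ i) w ≠ d1 := fun h => Nat.find_min hex hi (Or.inl h)
        have hnd2 : (sg ^ i) w ≠ d2 := fun h => Nat.find_min hex hi (Or.inr h)
        rw [pow_succ', Perm.mul_apply, ih (by omega), hsg'app,
          hs_other _ hnd1 hnd2 hne1 hne2', ← Perm.mul_apply, ← pow_succ']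
    have hfin := key (Nat.find hex) le_rfl
    rcases hk with h | h
    · exact Or.inl ((sc_iff_pow sg' w d1).mpr ⟨Nat.find hex, by rw [hfin, h]⟩)
    · exact Or.inr ((sc_iff_pow sg' w d2).mpr ⟨Nat.find hex, by rw [hfin, h]⟩)
  have Fsplitv : ∀ w, sg.SameCycle w (al d1) →
      (sg'.SameCycle w (al d1) ∨ sg'.SameCycle w (al d2)) := by
    intro w hw
    obtain ⟨k0, hk0⟩ := (sc_iff_pow sg w (al d1)).mp hw
    have hex : ∃ k, (sg ^ k) w = al d1 ∨ (sg ^ k) w = al d2 := ⟨k0, Or.inl hk0⟩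
    have hk : (sg ^ Nat.find hex) w = al d1 ∨ (sg ^ Nat.find hex) w = al d2 :=
      Nat.find_spec hex
    have key : ∀ j, j ≤ Nat.find hex → (sg' ^ j) w = (sg ^ j) w := by
      intro j hj
      induction j with
      | zero => rfl
      | succ i ih =>
        have hi : i < Nat.find hex := by omega
        have hpow : sg.SameCycle w ((sg ^ i) w) := ⟨(i : ℤ), by simp⟩
        have hcyc2 : sg.SameCycle ((sg ^ i) w) (al d1) := hpow.symm.trans hw
        obtain ⟨hnd1, hnd2⟩ := hnotin_v _ hcyc2
        have hne1 : (sg ^ i) w ≠ al d1 := fun h => Nat.find_min hex hi (Or.inl h)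
        have hne2' : (sg ^ i) w ≠ al d2 := fun h => Nat.find_min hex hi (Or.inr h)
        rw [pow_succ', Perm.mul_apply, ih (by omega), hsg'app,
          hs_other _ hnd1 hnd2 hne1 hne2', ← Perm.mul_apply, ← pow_succ']
    have hfin := key (Nat.find hex) le_rfl
    rcases hk with h | h
    · exact Or.inl ((sc_iff_pow sg' w (al d1)).mpr ⟨Nat.find hex, by rw [hfin, h]⟩)
    · exact Or.inr ((sc_iff_pow sg' w (al d2)).mpr ⟨Nat.find hex, by rw [hfin, h]⟩)
  have F6 : ∀ w, ¬ sg.SameCycle w d1 → ¬ sg.SameCycle w (al d1) →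
      ∀ v, sg.SameCycle w v → sg'.SameCycle w v := by
    intro w h1 h2 v hv
    refine sc_agree ?_ hv
    intro u hu
    have hu1 : u ≠ d1 := by rintro rfl; exact h1 hu
    have hu2 : u ≠ d2 := by rintro rfl; exact h1 (hu.trans hpar.1.symm)
    have hu3 : u ≠ al d1 := by rintro rfl; exact h2 hu
    have hu4 : u ≠ al d2 := by rintro rfl; exact h2 (hu.trans hpar.2.symm)
    rw [hsg'app, hs_other u hu1 hu2 hu3 hu4]
  have FA : ∀ w, A w → ¬ sg.SameCycle w d1 → ¬ sg.SameCycle w (al d1) →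
      ∀ v, sg.SameCycle w v → A v := by
    intro w hA h1 h2 v hv
    have hconn' : (conns sg' al').r w v := sc_sigma_le_conns (F6 w h1 h2 v hv)
    exact (conns sg' al').trans ((conns sg' al').symm hconn') hA
  have hSCe1B : ∀ w, sg'.SameCycle w (al d1) → ¬ A w := by
    intro w h
    rw [hnA]
    exact (conns sg' al').trans (sc_sigma_le_conns h) he1d2conn
  have hSCd2B : ∀ w, sg'.SameCycle w d2 → ¬ A w := by
    intro w h
    rw [hnA]
    exact sc_sigma_le_conns h
  have F5 : ∀ w w', A w → A w' → sg.SameCycle w w' → sg'.SameCycle w w' := by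
    intro w w' hAw hAw' hww
    by_cases h1 : sg.SameCycle w d1
    · have hw1 : sg'.SameCycle w d1 := by
        rcases Fsplit w h1 with h | h
        · exact h
        · exact absurd hAw (hSCd2B w h)
      have hw'1 : sg'.SameCycle w' d1 := by
        rcases Fsplit w' (hww.symm.trans h1) with h | h
        · exact h
        · exact absurd hAw' (hSCd2B w' h)
      exact hw1.trans hw'1.symm
    by_cases h2 : sg.SameCycle w (al d1)
    · have hw1 : sg'.SameCycle w (al d2) := by
        rcases Fsplitv w h2 with h | h
        · exact absurd hAw (hSCe1B w h)
        · exact h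
      have hw'1 : sg'.SameCycle w' (al d2) := by
        rcases Fsplitv w' (hww.symm.trans h2) with h | h
        · exact absurd hAw' (hSCe1B w' h)
        · exact h
      exact hw1.trans hw'1.symm
    · exact F6 w h1 h2 w' hww
  -- the sub-map on A
  haveI : Nonempty {a // A a} := ⟨⟨d1, hAd1⟩⟩
  haveI : Nonempty {a // ¬ A a} := ⟨⟨d2, hBd2⟩⟩
  set sgA := sg'.subtypePerm (fun x => (hAsg' x).symm) with hsgAdef
  set alA := al'.subtypePerm (fun x => (hAal' x).symm) with halAdef
  set sgB := sg'.subtypePerm (p := fun a => ¬ A a) (fun x => not_iff_not.mpr (hAsg' x).symm) with hsgBdef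
  set alB := al'.subtypePerm (p := fun a => ¬ A a) (fun x => not_iff_not.mpr (hAal' x).symm) with halBdef
  have hconnA : ∀ x y : {a // A a}, (conns sgA alA).r x y := by
    intro x y
    have h : (conns sg' al').r (x : D) (y : D) :=
      (conns sg' al').trans x.2 ((conns sg' al').symm y.2)
    exact conns_restrict hAsg' hAal' h x.2 y.2
  have hconnB : ∀ x y : {a // ¬ A a}, (conns sgB alB).r x y := by
    intro x y
    have h : (conns sg' al').r (x : D) (y : D) :=
      (conns sg' al').trans ((hnA _).mp x.2) ((conns sg' al').symm ((hnA _).mp y.2))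
    exact conns_restrict (fun w => not_iff_not.mpr (hAsg' w))
      (fun w => not_iff_not.mpr (hAal' w)) h x.2 y.2
  have hAphi : ∀ w, A w ↔ A ((sg' * al') w) := by
    intro w
    rw [Perm.mul_apply]
    exact (hAal' w).trans (hAsg' (al' w))
  have hsgAalA : sgA * alA = (sg' * al').subtypePerm (fun x => (hAphi x).symm) := by
    rw [hsgAdef, halAdef, subtypePerm_mul (hp := hAsg') (hq := hAal')]
  have hsgBalB : sgB * alB = (sg' * al').subtypePerm (p := fun a => ¬ A a) (fun x => not_iff_not.mpr (hAphi x).symm) := by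
    rw [hsgBdef, halBdef, subtypePerm_mul (hp := fun x => not_iff_not.mpr (hAsg' x)) (hq := fun x => not_iff_not.mpr (hAal' x))]
  have hzadd_sg : z sg' = z sgA + z sgB := z_add sg' hAsg'
  have hzadd_al : z al' = z alA + z alB := z_add al' hAal'
  have hzadd_phi : z (sg' * al') = z ((sg' * al').subtypePerm (fun x => (hAphi x).symm)) +
      z ((sg' * al').subtypePerm (p := fun a => ¬ A a) (fun x => not_iff_not.mpr (hAphi x).symm)) := z_add (sg' * al') hAphi
  have hcardadd : Fintype.card {a // A a} + Fintype.card {a // ¬ A a} = Fintype.card D := by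
    have h1 : Fintype.card {a // ¬ A a} = Fintype.card D - Fintype.card {a // A a} :=
      Fintype.card_subtype_compl _
    have h2 : Fintype.card {a // A a} ≤ Fintype.card D := Fintype.card_subtype_le _
    omega
  have hthmA_A := thmA sgA alA
  have hthmA_B := thmA sgB alB
  have hccA : cc sgA alA = 1 := card_quot_one hconnA
  have hccB : cc sgB alB = 1 := card_quot_one hconnB
  have heulerA : z sgA + z alA + z (sgA * alA) = Fintype.card {a // A a} + 2 := by
    rw [hccA] at hthmA_A
    rw [hccB] at hthmA_B
    rw [hsgAalA] at hthmA_A ⊢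
    rw [hsgBalB] at hthmA_B
    omega
  have hloop' : ∀ w, ¬ sg'.SameCycle w (al' w) := by
    intro w hsc
    have hsc2 : sg.SameCycle w (al' w) := F1 _ _ hsc
    by_cases h1 : w = d1
    · rw [h1, hal'_d1] at hsc2
      exact hloop d2 (hsc2.symm.trans hpar.1).symm
    by_cases h2 : w = d2
    · rw [h2, hal'_d2] at hsc2
      exact hloop d1 (hpar.1.trans hsc2)
    by_cases h3 : w = al d1
    · rw [h3, hal'_e1] at hsc2
      exact hloop d2 (hpar.2.symm.trans hsc2).symm
    by_cases h4 : w = al d2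
    · rw [h4, hal'_e2] at hsc2
      exact hloop d1 ((hpar.2.trans hsc2).symm)
    · rw [hal'_other w h1 h2 h3 h4] at hsc2
      exact hloop w hsc2
  have hmhA : mapHyps {a // A a} sgA alA := by
    refine ⟨?_, ?_, ?_, hconnA, ?_, ?_, heulerA⟩
    · intro x
      apply Subtype.ext
      exact hinv' (x : D)
    · intro x h
      exact hffp' (x : D) (congrArg Subtype.val h)
    · intro x h
      rw [hsgAdef, sc_subtype_iff (hP := hAsg')] at h
      exact hloop' (x : D) h
    · intro x
      apply Subtype.ext
      show sg' (al' (sg' (al' (sg' (al' (x : D)))))) = (x : D)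
      rw [hphi, hphi, hphi]
      exact htri (x : D)
    · intro x h
      have h2 : sg' (al' (x : D)) = (x : D) := congrArg Subtype.val h
      rw [hphi] at h2
      exact hne2 (x : D) h2
  have hcardA_lt : Fintype.card {a // A a} < Fintype.card D := by
    have : 0 < Fintype.card {a // ¬ A a} := Fintype.card_pos
    omega
  obtain ⟨xA, hsimpA, hpairA⟩ := IH {a // A a} hcardA_lt sgA alA hmhA ⟨d1, hAd1⟩
  -- transfer back
  have hxA_A : A (xA : D) := xA.2
  have halAd1 : alA (⟨d1, hAd1⟩ : {a // A a}) = ⟨al d2, hAe2⟩ := Subtype.ext hal'_d1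
  have hxne_d1 : (xA : D) ≠ d1 := by
    intro h
    apply hpairA
    have hx : xA = (⟨d1, hAd1⟩ : {a // A a}) := Subtype.ext h
    rw [hx]
    exact Or.inl ⟨Perm.SameCycle.refl _ _, Perm.SameCycle.refl _ _⟩
  have hxne_e2 : (xA : D) ≠ al d2 := by
    intro h
    apply hpairA
    have hx : xA = (⟨al d2, hAe2⟩ : {a // A a}) := Subtype.ext h
    have h2 : alA (⟨al d2, hAe2⟩ : {a // A a}) = ⟨d1, hAd1⟩ := Subtype.ext hal'_e2
    rw [hx]
    refine Or.inr ⟨?_, ?_⟩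
    · rw [halAd1]
    · rw [h2]
  have hxne_d2 : (xA : D) ≠ d2 := fun h => hBd2 (h ▸ hxA_A)
  have hxne_e1 : (xA : D) ≠ al d1 := fun h => hBe1 (h ▸ hxA_A)
  have halx : al' (xA : D) = al (xA : D) := hal'_other _ hxne_d1 hxne_d2 hxne_e1 hxne_e2
  have hAalx : A (al (xA : D)) := by
    have := (hAal' (xA : D)).mp hxA_A
    rwa [halx] at this
  have halAxA : (alA xA : D) = al (xA : D) := halx
  have hC2a : ¬ (sg.SameCycle (xA : D) d1 ∧ sg.SameCycle (al (xA : D)) (al d1)) := by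
    rintro ⟨h1, h2⟩
    have hx1 : sg'.SameCycle (xA : D) d1 := by
      rcases Fsplit _ h1 with h | h
      · exact h
      · exact absurd hxA_A (hSCd2B _ h)
    have hx2 : sg'.SameCycle (al (xA : D)) (al d2) := by
      rcases Fsplitv _ h2 with h | h
      · exact absurd hAalx (hSCe1B _ h)
      · exact h
    apply hpairA
    refine Or.inl ⟨?_, ?_⟩
    · rw [hsgAdef, sc_subtype_iff (hP := hAsg')]
      exact hx1
    · rw [halAd1, hsgAdef, sc_subtype_iff (hP := hAsg')]
      show sg'.SameCycle ((alA xA : D)) (al d2)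
      rw [halAxA]
      exact hx2
  have hC2b : ¬ (sg.SameCycle (xA : D) (al d1) ∧ sg.SameCycle (al (xA : D)) d1) := by
    rintro ⟨h1, h2⟩
    have hx1 : sg'.SameCycle (xA : D) (al d2) := by
      rcases Fsplitv _ h1 with h | h
      · exact absurd hxA_A (hSCe1B _ h)
      · exact h
    have hx2 : sg'.SameCycle (al (xA : D)) d1 := by
      rcases Fsplit _ h2 with h | h
      · exact h
      · exact absurd hAalx (hSCd2B _ h)
    apply hpairA
    refine Or.inr ⟨?_, ?_⟩
    · rw [halAd1, hsgAdef, sc_subtype_iff (hP := hAsg')]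
      exact hx1
    · rw [hsgAdef, sc_subtype_iff (hP := hAsg')]
      show sg'.SameCycle ((alA xA : D)) d1
      rw [halAxA]
      exact hx2
  have hMsimple : simpleDart sg al (xA : D) := by
    intro y hy
    obtain ⟨hy1, hy2⟩ := hy
    by_cases hAy : A y
    · by_cases hyd1 : y = d1
      · exfalso
        rw [hyd1] at hy1 hy2
        exact hC2a ⟨hy1.symm, hy2.symm⟩
      by_cases hye2 : y = al d2
      · exfalso
        rw [hye2] at hy1 hy2
        apply hC2b
        constructor
        · exact hy1.symm.trans hpar.2.symm
        · have h3 : sg.SameCycle (al (al d2)) (al (xA : D)) := hy2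
          rw [hinv] at h3
          exact h3.symm.trans hpar.1.symm
      · have hyd2 : y ≠ d2 := fun h => hBd2 (h ▸ hAy)
        have hye1 : y ≠ al d1 := fun h => hBe1 (h ▸ hAy)
        have hAaly : A (al y) := by
          have := (hAal' y).mp hAy
          rwa [hal'_other y hyd1 hyd2 hye1 hye2] at this
        have hyA : ({ val := y, property := hAy } : {a // A a}) = xA → y = (xA : D) :=
          fun h => congrArg Subtype.val h
        apply hyA
        apply hsimpA
        constructor
        · rw [hsgAdef, sc_subtype_iff (hP := hAsg')]
          exact F5 y (xA : D) hAy hxA_A hy1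
        · rw [hsgAdef, sc_subtype_iff (hP := hAsg')]
          show sg'.SameCycle ((alA ⟨y, hAy⟩ : D)) ((alA xA : D))
          have hh : (alA (⟨y, hAy⟩ : {a // A a}) : D) = al y :=
            hal'_other y hyd1 hyd2 hye1 hye2
          rw [hh, halAxA]
          exact F5 (al y) (al (xA : D)) hAaly hAalx hy2
    · by_cases hyd2 : y = d2
      · exfalso
        rw [hyd2] at hy1 hy2
        apply hC2a
        constructor
        · exact hy1.symm.trans hpar.1.symm
        · exact hy2.symm.trans hpar.2.symm
      by_cases hye1 : y = al d1
      · exfalso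
        rw [hye1] at hy1 hy2
        apply hC2b
        constructor
        · exact hy1.symm
        · have h3 : sg.SameCycle (al (al d1)) (al (xA : D)) := hy2
          rw [hinv] at h3
          exact h3.symm
      · exfalso
        have hyd1 : y ≠ d1 := fun h => hAy (h ▸ hAd1)
        have hye2 : y ≠ al d2 := fun h => hAy (h ▸ hAe2)
        have hnAaly : ¬ A (al y) := by
          have := (not_iff_not.mpr (hAal' y)).mp hAy
          rwa [hal'_other y hyd1 hyd2 hye1 hye2] at this
        have claim1 : sg.SameCycle (xA : D) d1 ∨ sg.SameCycle (xA : D) (al d1) := by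
          by_contra hc
          push_neg at hc
          exact hAy (FA _ hxA_A hc.1 hc.2 y hy1.symm)
        have claim2 : sg.SameCycle (al (xA : D)) d1 ∨ sg.SameCycle (al (xA : D)) (al d1) := by
          by_contra hc
          push_neg at hc
          exact hnAaly (FA _ hAalx hc.1 hc.2 (al y) hy2.symm)
        rcases claim1 with c1 | c1 <;> rcases claim2 with c2 | c2
        · exact hloop (xA : D) (c1.trans c2.symm)
        · exact hC2a ⟨c1, c2⟩
        · exact hC2b ⟨c1, c2⟩
        · exact hloop (xA : D) (c1.trans c2.symm)
  have hCw : ∃ w, (w = (xA : D) ∨ w = al (xA : D)) ∧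
      ¬ sg.SameCycle w d1 ∧ ¬ sg.SameCycle w (al d1) := by
    by_cases h1 : sg.SameCycle (xA : D) d1
    · refine ⟨al (xA : D), Or.inr rfl, ?_, ?_⟩
      · intro h
        exact hloop (xA : D) (h1.trans h.symm)
      · intro h
        exact hC2a ⟨h1, h⟩
    by_cases h2 : sg.SameCycle (xA : D) (al d1)
    · refine ⟨al (xA : D), Or.inr rfl, ?_, ?_⟩
      · intro h
        exact hC2b ⟨h2, h⟩
      · intro h
        exact hloop (xA : D) (h2.trans h.symm)
    · exact ⟨(xA : D), Or.inl rfl, h1, h2⟩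
  obtain ⟨w, hw, hw1, hw2⟩ := hCw
  refine ⟨hcomp, (xA : D), hMsimple, hxA_A, hAalx, w, hw, ?_⟩
  intro v hv
  have hAw : A w := by
    rcases hw with rfl | rfl
    · exact hxA_A
    · exact hAalx
  exact FA w hAw hw1 hw2 v hv
theorem thmB : ∀ n : ℕ, ∀ (E : Type) [Fintype E] [Nonempty E], Fintype.card E ≤ n →
    ∀ (sg al : Perm E), mapHyps E sg al →
    ∀ b : E, ∃ d : E, simpleDart sg al d ∧ ¬ pairEq sg al d b := by
  intro n
  induction n using Nat.strong_induction_on with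
  | _ n ih =>
  intro E _ _ hcard sg al hmh b
  obtain ⟨hinv, hffp, hloop, hconn, htri, hne2, heuler⟩ := hmh
  by_cases hall : ∀ x y, parallel sg al x y → x = y
  · -- no multiple edges at all
    have h2 : 2 * z al = Fintype.card E := z_involution hinv hffp
    have h3' : ∀ x, (sg * al) ((sg * al) ((sg * al) x)) = x := by
      intro x; simp only [Perm.mul_apply]; exact htri x
    have h3ne : ∀ x, (sg * al) x ≠ x := by
      intro x; simp only [Perm.mul_apply]; exact hne2 x
    have h3 : 3 * z (sg * al) = Fintype.card E := z_order3 h3' h3ne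
    have hpos : 0 < Fintype.card E := Fintype.card_pos
    have hzsg3 : 3 ≤ z sg := by omega
    have hzsg3' : 3 ≤ Nat.card (Quotient (scs sg)) := hzsg3
    obtain ⟨q3, hq1, hq2⟩ := exists_third_class hzsg3'
      (Quotient.mk'' b) (Quotient.mk'' (al b))
    induction q3 using Quotient.inductionOn' with
    | h d =>
    refine ⟨d, fun d' hp => hall d' d hp, ?_⟩
    intro hp
    rcases hp with ⟨hsc, -⟩ | ⟨hsc, -⟩
    · exact hq1 (Quotient.sound' hsc)
    · exact hq2 (Quotient.sound' hsc)
  · push_neg at hall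
    obtain ⟨x0, y0, hp0, hne0⟩ := hall
    have IH' : ∀ (F : Type) [Fintype F] [Nonempty F], Fintype.card F < Fintype.card E →
        ∀ (sgF alF : Perm F), mapHyps F sgF alF →
        ∀ bF : F, ∃ dF : F, simpleDart sgF alF dF ∧ ¬ pairEq sgF alF dF bF := by
      intro F _ _ hlt sgF alF hmhF bF
      exact ih (Fintype.card F) (lt_of_lt_of_le hlt hcard) F le_rfl sgF alF hmhF bF
    have hmh' : mapHyps E sg al := ⟨hinv, hffp, hloop, hconn, htri, hne2, heuler⟩
    obtain ⟨hcomp, xA, hsimpA, hxA1, hxA2, wA, hwA, hwAcyc⟩ :=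
      pieceLemma sg al hmh' IH' x0 y0 hne0 hp0
    obtain ⟨-, xB, hsimpB, hxB1, hxB2, wB, hwB, hwBcyc⟩ :=
      pieceLemma sg al hmh' IH' y0 x0 (Ne.symm hne0) ⟨hp0.1.symm, hp0.2.symm⟩
    rw [cutS_symm al x0 y0] at hxB1 hxB2
    by_cases hb1 : pairEq sg al xA b
    · refine ⟨xB, hsimpB, ?_⟩
      intro hb2
      have hrel : sg.SameCycle wA b ∨ sg.SameCycle wA (al b) := by
        rcases hb1 with ⟨h1, h2⟩ | ⟨h1, h2⟩ <;> rcases hwA with rfl | rfl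
        · exact Or.inl h1
        · exact Or.inr h2
        · exact Or.inr h1
        · exact Or.inl h2
      have hclash : ∀ u, sg.SameCycle wA u →
          (conns (sg * cutS al x0 y0) (al * cutS al x0 y0)).r u y0 → False := by
        intro u hu hcu
        exact hcomp ((conns (sg * cutS al x0 y0) (al * cutS al x0 y0)).trans
          ((conns (sg * cutS al x0 y0) (al * cutS al x0 y0)).symm (hwAcyc u hu)) hcu)
      rcases hrel with hr | hr
      · rcases hb2 with ⟨h1, h2⟩ | ⟨h1, h2⟩
        · exact hclash xB (hr.trans h1.symm) hxB1
        · exact hclash (al xB) (hr.trans h2.symm) hxB2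
      · rcases hb2 with ⟨h1, h2⟩ | ⟨h1, h2⟩
        · exact hclash (al xB) (hr.trans h2.symm) hxB2
        · exact hclash xB (hr.trans h1.symm) hxB1
    · exact ⟨xA, hsimpA, hb1⟩

end MT17


open Equiv MT17 in
/-- Every multi-triangulated planar graph has at least one edge that is not a multiple
edge: some dart `d` such that there is exactly one dart with the same endpoints. -/
theorem stmt17 {V : Type*} [Fintype V] (M : MultiTriangulation V) :
    ∃ d : M.D,
      Nat.card {d' : M.D //
        M.head d' = M.head d ∧ M.head (M.rev d') = M.head (M.rev d)} = 1 := by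
  classical
  letI : Fintype M.D := M.fintypeD
  obtain ⟨al, hal⟩ : ∃ a : Equiv.Perm M.D, ∀ x, a x = M.rev x :=
    ⟨⟨M.rev, M.rev, M.rev_rev, M.rev_rev⟩, fun x => rfl⟩
  have head_pow : ∀ (k : ℕ) (x : M.D), M.head ((M.rot ^ k) x) = M.head x := by
    intro k
    induction k with
    | zero => intro x; rfl
    | succ i ih =>
      intro x
      rw [pow_succ', Equiv.Perm.mul_apply, M.rot_head, ih]
  have hhead : ∀ x y, M.rot.SameCycle x y ↔ M.head x = M.head y := by
    intro x y
    constructor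
    · intro h
      obtain ⟨k, hk⟩ := (MT17.sc_iff_pow M.rot x y).mp h
      rw [← hk, head_pow]
    · intro h
      obtain ⟨k, hk⟩ := M.rot_cyclic x y h
      exact (MT17.sc_iff_pow M.rot x y).mpr ⟨k, hk⟩
  have hinv : ∀ x, al (al x) = x := by
    intro x; rw [hal, hal]; exact M.rev_rev x
  have hffp : ∀ x, al x ≠ x := by
    intro x h
    rw [hal] at h
    exact M.no_loops x (by rw [h])
  have hloop : ∀ x, ¬ M.rot.SameCycle x (al x) := by
    intro x h
    have := (hhead x (al x)).mp h
    rw [hal] at this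
    exact M.no_loops x this.symm
  have hconn : ∀ x y, (MT17.conns M.rot al).r x y := by
    intro x y
    have key : ∀ u v, Relation.ReflTransGen
        (fun a b => ∃ d, M.head d = a ∧ M.head (M.rev d) = b) u v →
        ∀ x y : M.D, M.head x = u → M.head y = v → (MT17.conns M.rot al).r x y := by
      intro u v hrt
      induction hrt with
      | refl =>
        intro x y hx hy
        exact MT17.sc_sigma_le_conns ((hhead x y).mpr (hx.trans hy.symm))
      | tail hstep hd ih =>
        obtain ⟨d0, hd1, hd2⟩ := hd
        intro x y hx hy
        refine (MT17.conns M.rot al).trans (ih x d0 hx hd1) ?_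
        refine (MT17.conns M.rot al).trans (MT17.conns_alpha M.rot al d0) ?_
        refine MT17.sc_sigma_le_conns ((hhead (al d0) y).mpr ?_)
        rw [hal, hd2]
        exact hy.symm
    exact key _ _ (M.conn (M.head x) (M.head y)) x y rfl rfl
  have htri : ∀ x, M.rot (al (M.rot (al (M.rot (al x))))) = x := by
    intro x
    rw [hal, hal, hal]
    exact M.face_tri x
  have hne2 : ∀ x, M.rot (al x) ≠ x := by
    intro x
    rw [hal]
    exact M.face_ne x
  have hzal : 2 * MT17.z al = Fintype.card M.D := MT17.z_involution hinv hffp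
  have h3' : ∀ x, (M.rot * al) ((M.rot * al) ((M.rot * al) x)) = x := by
    intro x
    simp only [Equiv.Perm.mul_apply]
    exact htri x
  have h3ne : ∀ x, (M.rot * al) x ≠ x := by
    intro x
    simp only [Equiv.Perm.mul_apply]
    exact hne2 x
  have hzphi : 3 * MT17.z (M.rot * al) = Fintype.card M.D := MT17.z_order3 h3' h3ne
  have hzsg : MT17.z M.rot = Fintype.card V := by
    have hbij : Function.Bijective (fun q : Quotient (MT17.scs M.rot) =>
        q.liftOn' M.head (fun x y h => (hhead x y).mp h)) := by
      constructor
      · intro q1 q2 h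
        induction q1 using Quotient.inductionOn' with
        | h x =>
        induction q2 using Quotient.inductionOn' with
        | h y =>
        exact Quotient.sound' ((hhead x y).mpr h)
      · intro v
        obtain ⟨d0, hd0⟩ := M.covers v
        exact ⟨Quotient.mk'' d0, hd0⟩
    rw [MT17.z, Nat.card_eq_of_bijective _ hbij, Nat.card_eq_fintype_card]
  have hNE : Nonempty M.D := by
    by_contra h
    rw [not_nonempty_iff] at h
    have hcd : Fintype.card M.D = 0 := Fintype.card_eq_zero
    have he := M.euler
    rw [hcd] at he
    have hv : 0 < Fintype.card V := by omega
    obtain ⟨v⟩ := Fintype.card_pos_iff.mp hv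
    obtain ⟨d0, -⟩ := M.covers v
    exact h.false d0
  have heuler : MT17.z M.rot + MT17.z al + MT17.z (M.rot * al) = Fintype.card M.D + 2 := by
    have he := M.euler
    omega
  haveI := hNE
  obtain ⟨d, hsimp, -⟩ := MT17.thmB (Fintype.card M.D) M.D le_rfl M.rot al
    ⟨hinv, hffp, hloop, hconn, htri, hne2, heuler⟩ (Classical.arbitrary M.D)
  refine ⟨d, ?_⟩
  have hiff : ∀ d' : M.D,
      (M.head d' = M.head d ∧ M.head (M.rev d') = M.head (M.rev d)) ↔ d' = d := by
    intro d'
    constructor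
    · rintro ⟨h1, h2⟩
      refine hsimp d' ⟨(hhead d' d).mpr h1, (hhead (al d') (al d)).mpr ?_⟩
      rw [hal, hal]
      exact h2
    · rintro rfl
      exact ⟨rfl, rfl⟩
  rw [Nat.card_eq_fintype_card, Fintype.card_congr (Equiv.subtypeEquivRight hiff),
    Fintype.card_subtype_eq]
end
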